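/- arXiv:2601.12302 — 8 statements merged into one kernel-verified Lean document; each statement's English description precedes it below -/
import Mathlib

section
/- If G is the generator matrix of an [n,k,t] functional batch code over 𝔽₂, then (t+1)^n ≥ (2^k − 1)^t. -/
/-!
Over `𝔽₂` a vector lies in the span of some columns iff it is the sum of a subset of them, and
shrinking the disjoint sets `R_ℓ` to these subsets keeps them disjoint. So every `t`-tuple of
nonzero vectors is recovered from a labelling of the `n` columns by `t + 1` labels (the label of
`R_ℓ`, or "unused"), by summing the columns carrying each label. Hence the `(2^k - 1)^t` tuples
inject into the `(t + 1)^n` labellings.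
-/

/-- `G` is the generator matrix of an `[n,k,t]` functional batch code over `𝔽₂`:
for every `t`-tuple of nonzero vectors `α₁,…,α_t` in `𝔽₂^k` there exist pairwise
disjoint subsets `R₁,…,R_t` of the column index set such that each `α_ℓ` lies in the
`𝔽₂`-linear span of the columns of `G` indexed by `R_ℓ`. -/
def IsFunctionalBatchCode (k n t : ℕ) (G : Matrix (Fin k) (Fin n) (ZMod 2)) : Prop :=
  ∀ α : Fin t → Fin k → ZMod 2, (∀ ℓ, α ℓ ≠ 0) →
    ∃ R : Fin t → Finset (Fin n),
      (∀ ℓ₁ ℓ₂ : Fin t, ℓ₁ ≠ ℓ₂ → Disjoint (R ℓ₁) (R ℓ₂)) ∧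
      ∀ ℓ : Fin t,
        α ℓ ∈ Submodule.span (ZMod 2) ((fun j i => G i j) '' (R ℓ : Set (Fin n)))

open Finset Function

theorem exists_finset_subset_sum_eq_of_mem_span_image_zmod_two {ι M : Type*} [AddCommGroup M]
    [Module (ZMod 2) M] {v : ι → M} {s : Set ι} {x : M}
    (hx : x ∈ Submodule.span (ZMod 2) (v '' s)) :
    ∃ T : Finset ι, ↑T ⊆ s ∧ ∑ j ∈ T, v j = x := by
  obtain ⟨l, hls, rfl⟩ := (Finsupp.mem_span_image_iff_linearCombination (ZMod 2)).1 hx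
  have one_of_ne_zero : ∀ a : ZMod 2, a ≠ 0 → a = 1 := by decide
  refine ⟨l.support, (Finsupp.mem_supported _ l).1 hls, ?_⟩
  rw [Finsupp.linearCombination_apply, Finsupp.sum]
  refine sum_congr rfl fun j hj => ?_
  rw [one_of_ne_zero (l j) (Finsupp.mem_support_iff.1 hj), one_smul]

theorem exists_option_label_of_pairwise_disjoint {ι κ : Type*} {R : κ → Set ι}
    (hR : Pairwise (Disjoint on R)) :
    ∃ f : ι → Option κ, ∀ ℓ j, j ∈ R ℓ ↔ f j = some ℓ := by
  classical
  refine ⟨fun j => if h : ∃ ℓ, j ∈ R ℓ then some h.choose else none, fun ℓ j => ?_⟩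
  by_cases h : ∃ ℓ, j ∈ R ℓ
  · simp only [dif_pos h, Option.some_inj]
    exact ⟨fun hj => by_contra fun hne => Set.disjoint_left.1 (hR hne) h.choose_spec hj,
      fun hℓ => hℓ ▸ h.choose_spec⟩
  · simp only [dif_neg h, reduceCtorEq, iff_false]
    exact fun hj => h ⟨ℓ, hj⟩

def labelSums {ι κ M : Type*} [Fintype ι] [DecidableEq κ] [AddCommMonoid M] (v : ι → M)
    (f : ι → Option κ) (ℓ : κ) : M :=
  ∑ j with f j = some ℓ, v j

theorem IsFunctionalBatchCode.exists_labelSums_eq {k n t : ℕ}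
    {G : Matrix (Fin k) (Fin n) (ZMod 2)} (hG : IsFunctionalBatchCode k n t G)
    {α : Fin t → Fin k → ZMod 2} (hα : ∀ ℓ, α ℓ ≠ 0) :
    ∃ f : Fin n → Option (Fin t), labelSums (fun j i => G i j) f = α := by
  obtain ⟨R, hR, hspan⟩ := hG α hα
  choose T hTR hTsum using
    fun ℓ => exists_finset_subset_sum_eq_of_mem_span_image_zmod_two (hspan ℓ)
  have hT : Pairwise (Disjoint on fun ℓ => (T ℓ : Set (Fin n))) := fun ℓ₁ ℓ₂ hne =>
    disjoint_coe.2 ((hR ℓ₁ ℓ₂ hne).mono (coe_subset.1 (hTR ℓ₁)) (coe_subset.1 (hTR ℓ₂)))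
  obtain ⟨f, hf⟩ := exists_option_label_of_pairwise_disjoint hT
  refine ⟨f, funext fun ℓ => ?_⟩
  rw [labelSums, ← hTsum ℓ]
  congr 1
  ext j
  rw [mem_filter, ← mem_coe (s := T ℓ), hf ℓ j]
  exact and_iff_right (mem_univ j)

/-- If `G` generates an `[n,k,t]` functional batch code over `𝔽₂`, then
`(t+1)^n ≥ (2^k − 1)^t`. -/
theorem functional_batch_code_length_bound (k n t : ℕ)
    (G : Matrix (Fin k) (Fin n) (ZMod 2))
    (hG : IsFunctionalBatchCode k n t G) :
    (t + 1) ^ n ≥ (2 ^ k - 1) ^ t := by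
  classical
  let nonzeroTuples : Finset (Fin t → Fin k → ZMod 2) :=
    Fintype.piFinset fun _ => univ.erase 0
  have hcover : nonzeroTuples ⊆ univ.image (labelSums fun j i => G i j) := fun α hα => by
    have hα' : ∀ ℓ, α ℓ ≠ 0 := by simpa [nonzeroTuples] using hα
    simpa using hG.exists_labelSums_eq hα'
  calc (2 ^ k - 1) ^ t = #nonzeroTuples := by simp [nonzeroTuples, card_erase_of_mem]
    _ ≤ #(univ.image (labelSums fun j i => G i j)) := card_le_card hcover
    _ ≤ Fintype.card (Fin n → Option (Fin t)) := card_image_le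
    _ = (t + 1) ^ n := by simp
end

section
/- If G is the generator matrix of an [n,k,t,r] functional batch code over 𝔽₂, then θ_{t,r}(n) ≥ (2^k − 1)^t. -/
/-- `θ_{t,r}(n)`: the number of labellings `f : {1,…,n} → {0,1,…,t}` such that every
nonzero label is used at least once and at most `r` times. -/
def theta (t r n : ℕ) : ℕ :=
  Finset.card (Finset.univ.filter fun f : Fin n → Fin (t + 1) =>
    ∀ ℓ : Fin (t + 1), ℓ.val ≠ 0 →
      1 ≤ (Finset.univ.filter fun j : Fin n => f j = ℓ).card ∧
      (Finset.univ.filter fun j : Fin n => f j = ℓ).card ≤ r)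

/-- `G` is the generator matrix of an `[n,k,t,r]` functional batch code over `𝔽₂`:
for every `t`-tuple of nonzero vectors `α₁,…,α_t` in `𝔽₂^k` there exist pairwise
disjoint subsets `R₁,…,R_t` of the column index set, each of size at most `r`, such
that each `α_ℓ` lies in the `𝔽₂`-linear span of the columns of `G` indexed by `R_ℓ`. -/
def IsFunctionalBatchCodeLoc (k n t r : ℕ) (G : Matrix (Fin k) (Fin n) (ZMod 2)) : Prop :=
  ∀ α : Fin t → Fin k → ZMod 2, (∀ ℓ, α ℓ ≠ 0) →
    ∃ R : Fin t → Finset (Fin n),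
      (∀ ℓ₁ ℓ₂ : Fin t, ℓ₁ ≠ ℓ₂ → Disjoint (R ℓ₁) (R ℓ₂)) ∧
      (∀ ℓ : Fin t, (R ℓ).card ≤ r) ∧
      ∀ ℓ : Fin t,
        α ℓ ∈ Submodule.span (ZMod 2) ((fun j i => G i j) '' (R ℓ : Set (Fin n)))

/-!
Each nonzero `t`-tuple `α` is the tuple of subset sums `ℓ ↦ ∑_{j ∈ S_ℓ} g_j` of the columns `g_j`
of `G` over some family `(S_ℓ)` of pairwise disjoint sets of size at most `r`, since over `𝔽₂`
a vector in the span of a set of columns is the sum of a subset of them; these sets are nonempty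
because `α_ℓ ≠ 0`. So there are at least `(2^k - 1)^t` such families, and a family is recovered
from the labelling of `{1,…,n}` that gives label `ℓ` to the points of `S_ℓ` and `0` to all others,
which is one of the labellings counted by `θ_{t,r}(n)`.
-/

open Finset Function Matrix

theorem exists_subset_sum_eq_of_mem_span_image {ι M : Type*} [DecidableEq ι] [AddCommGroup M]
    [Module (ZMod 2) M] (g : ι → M) {R : Finset ι} {x : M}
    (hx : x ∈ Submodule.span (ZMod 2) (g '' (R : Set ι))) :
    ∃ S ⊆ R, ∑ j ∈ S, g j = x := by
  induction R using Finset.induction_on generalizing x with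
  | empty =>
    simp only [coe_empty, Set.image_empty, Submodule.span_empty, Submodule.mem_bot] at hx
    exact ⟨∅, Subset.rfl, by simp [hx]⟩
  | @insert a R ha ih =>
    rw [coe_insert, Set.image_insert_eq, Submodule.mem_span_insert] at hx
    obtain ⟨c, z, hz, rfl⟩ := hx
    obtain ⟨S, hSR, rfl⟩ := ih hz
    have hc : c = 0 ∨ c = 1 := by revert c; decide
    rcases hc with rfl | rfl
    · exact ⟨S, hSR.trans (subset_insert _ _), by simp⟩
    · refine ⟨insert a S, insert_subset_insert _ hSR, ?_⟩
      rw [sum_insert fun h => ha (hSR h), one_smul]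

section Labelling

variable {t n : ℕ}

open Classical in
noncomputable def boundedDisjointFamilies (t r n : ℕ) : Finset (Fin t → Finset (Fin n)) :=
  univ.filter fun S => Pairwise (Disjoint on S) ∧ ∀ ℓ, (S ℓ).Nonempty ∧ #(S ℓ) ≤ r

theorem mem_boundedDisjointFamilies {r : ℕ} {S : Fin t → Finset (Fin n)} :
    S ∈ boundedDisjointFamilies t r n ↔
      Pairwise (Disjoint on S) ∧ ∀ ℓ, (S ℓ).Nonempty ∧ #(S ℓ) ≤ r := by
  simp [boundedDisjointFamilies]

open Classical in
noncomputable def labellingOfFamily (S : Fin t → Finset (Fin n)) (j : Fin n) : Fin (t + 1) :=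
  if h : ∃ ℓ, j ∈ S ℓ then h.choose.succ else 0

theorem filter_labellingOfFamily_eq_succ {S : Fin t → Finset (Fin n)}
    (hS : Pairwise (Disjoint on S)) (ℓ : Fin t) :
    (univ.filter fun j => labellingOfFamily S j = ℓ.succ) = S ℓ := by
  ext j
  rw [mem_filter, labellingOfFamily, and_iff_right (mem_univ j)]
  split_ifs with h
  · rw [Fin.succ_inj]
    refine ⟨fun hℓ => hℓ ▸ h.choose_spec, fun hj => ?_⟩
    by_contra hne
    exact disjoint_left.mp (hS hne) h.choose_spec hj
  · exact ⟨fun h0 => absurd h0.symm (Fin.succ_ne_zero ℓ), fun hj => absurd ⟨ℓ, hj⟩ h⟩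

theorem card_boundedDisjointFamilies_le_theta (t r n : ℕ) :
    #(boundedDisjointFamilies t r n) ≤ theta t r n := by
  refine card_le_card_of_injOn labellingOfFamily (fun S hS => ?_) (fun S hS S' hS' h => ?_)
  · rw [mem_coe, mem_boundedDisjointFamilies] at hS
    rw [mem_coe, mem_filter]
    refine ⟨mem_univ _, fun m hm => ?_⟩
    obtain ⟨ℓ, rfl⟩ := Fin.exists_succ_eq.mpr (Fin.val_ne_zero_iff.mp hm)
    rw [filter_labellingOfFamily_eq_succ hS.1]
    exact ⟨card_pos.mpr (hS.2 ℓ).1, (hS.2 ℓ).2⟩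
  · rw [mem_coe, mem_boundedDisjointFamilies] at hS hS'
    funext ℓ
    rw [← filter_labellingOfFamily_eq_succ hS.1, ← filter_labellingOfFamily_eq_succ hS'.1, h]

end Labelling

theorem card_piFinset_ne_zero (t k : ℕ) :
    #(Fintype.piFinset fun _ : Fin t => ({0}ᶜ : Finset (Fin k → ZMod 2))) = (2 ^ k - 1) ^ t := by
  simp [card_compl]

theorem IsFunctionalBatchCodeLoc.piFinset_ne_zero_subset {k n t r : ℕ}
    {G : Matrix (Fin k) (Fin n) (ZMod 2)} (hG : IsFunctionalBatchCodeLoc k n t r G) :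
    (Fintype.piFinset fun _ => ({0}ᶜ : Finset (Fin k → ZMod 2))) ⊆
      (boundedDisjointFamilies t r n).image fun S ℓ => ∑ j ∈ S ℓ, Gᵀ j := by
  intro α hα
  simp only [Fintype.mem_piFinset, mem_compl, mem_singleton] at hα
  obtain ⟨R, hdisj, hcard, hspan⟩ := hG α hα
  choose S hSR hsum using fun ℓ => exists_subset_sum_eq_of_mem_span_image _ (hspan ℓ)
  refine mem_image.mpr ⟨S, mem_boundedDisjointFamilies.mpr ⟨?_, fun ℓ => ⟨?_, ?_⟩⟩, funext hsum⟩
  · exact fun ℓ₁ ℓ₂ h => (hdisj ℓ₁ ℓ₂ h).mono (hSR ℓ₁) (hSR ℓ₂)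
  · exact nonempty_iff_ne_empty.mpr fun h => hα ℓ (by rw [← hsum ℓ, h, sum_empty])
  · exact (card_le_card (hSR ℓ)).trans (hcard ℓ)

/-- If `G` generates an `[n,k,t,r]` functional batch code over `𝔽₂`, then
`θ_{t,r}(n) ≥ (2^k − 1)^t`. -/
theorem theta_ge_of_functional_batch_code (k n t r : ℕ)
    (G : Matrix (Fin k) (Fin n) (ZMod 2))
    (hG : IsFunctionalBatchCodeLoc k n t r G) :
    theta t r n ≥ (2 ^ k - 1) ^ t :=
  calc (2 ^ k - 1) ^ t
      = #(Fintype.piFinset fun _ : Fin t => ({0}ᶜ : Finset (Fin k → ZMod 2))) :=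
        (card_piFinset_ne_zero t k).symm
    _ ≤ #((boundedDisjointFamilies t r n).image fun S ℓ => ∑ j ∈ S ℓ, Gᵀ j) :=
        card_le_card hG.piFinset_ne_zero_subset
    _ ≤ #(boundedDisjointFamilies t r n) := card_image_le
    _ ≤ theta t r n := card_boundedDisjointFamilies_le_theta t r n
end

section
/- For all integers t ≥ 1, r ≥ 1 and n ≥ 2r − 1, θ_{t,r}(n) ≤ (C(n,1) + C(n,2) + ⋯ + C(n,r)) · θ_{t−1,r}(n−1) ≤ r · C(n,r) · θ_{t−1,r}(n−1). -/
/-- truncation `Fin (s+2) → Fin (s+1)` sending `last` to `0`. -/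
def trunc (s : ℕ) (x : Fin (s + 2)) : Fin (s + 1) :=
  if hx : x.val < s + 1 then ⟨x.val, hx⟩ else 0

lemma trunc_eq_iff (s : ℕ) (ℓ : Fin (s + 1)) (hℓ : ℓ.val ≠ 0) (x : Fin (s + 2)) :
    trunc s x = ℓ ↔ x = Fin.castSucc ℓ := by
  unfold trunc
  have hℓs : ℓ.val < s + 1 := ℓ.isLt
  constructor
  · intro h
    split_ifs at h with hx
    · apply Fin.ext
      have : x.val = ℓ.val := congrArg Fin.val h
      simpa using this
    · exact absurd (congrArg Fin.val h).symm (by simpa using hℓ)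
  · rintro rfl
    rw [dif_pos (by simp only [Fin.coe_castSucc]; exact hℓs)]
    apply Fin.ext; simp

lemma trunc_inj (s : ℕ) {x y : Fin (s + 2)} (hx : x ≠ Fin.last (s + 1))
    (hy : y ≠ Fin.last (s + 1)) (h : trunc s x = trunc s y) : x = y := by
  have hx' : x.val < s + 1 := Fin.val_lt_last hx
  have hy' : y.val < s + 1 := Fin.val_lt_last hy
  unfold trunc at h
  rw [dif_pos hx', dif_pos hy'] at h
  exact Fin.ext (by simpa using congrArg Fin.val h)

lemma choose_step (n k : ℕ) (h : 2 * k + 1 ≤ n) : n.choose k ≤ n.choose (k + 1) := by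
  have key := Nat.choose_succ_right_eq n k
  have h1 : k + 1 ≤ n - k := by omega
  have : n.choose k * (k + 1) ≤ n.choose (k + 1) * (k + 1) := by
    rw [key]
    exact Nat.mul_le_mul_left _ h1
  exact Nat.le_of_mul_le_mul_right this (Nat.succ_pos k)

lemma choose_le_choose_of (n j r : ℕ) (hj : j ≤ r) (hn : r + r ≤ n + 1) :
    n.choose j ≤ n.choose r := by
  induction r with
  | zero => simp_all
  | succ r' ih =>
    rcases Nat.eq_or_lt_of_le hj with rfl | hlt
    · exact le_refl _
    · exact le_trans (ih (by omega) (by omega)) (choose_step n r' (by omega))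

lemma main_step (s r m : ℕ) :
    theta (s + 1) r (m + 1) ≤ (∑ j ∈ Finset.Icc 1 r, (m + 1).choose j) * theta s r m := by
  classical
  set P : Finset (Finset (Fin (m + 1))) :=
    (Finset.Icc 1 r).biUnion (fun j => Finset.powersetCard j Finset.univ) with hP
  set G : Finset (Fin m → Fin (s + 1)) :=
    (Finset.univ.filter fun g : Fin m → Fin (s + 1) =>
      ∀ ℓ : Fin (s + 1), ℓ.val ≠ 0 →
        1 ≤ (Finset.univ.filter fun j : Fin m => g j = ℓ).card ∧
        (Finset.univ.filter fun j : Fin m => g j = ℓ).card ≤ r) with hG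
  have hPcard : P.card = ∑ j ∈ Finset.Icc 1 r, (m + 1).choose j := by
    rw [hP, Finset.card_biUnion]
    · refine Finset.sum_congr rfl fun j _ => ?_
      rw [Finset.card_powersetCard]
      simp
    · intro a _ b _ hab
      refine Finset.disjoint_left.2 fun S hSa hSb => hab ?_
      rw [Finset.mem_powersetCard_univ] at hSa hSb
      omega
  have hGcard : G.card = theta s r m := rfl
  -- the injection
  let Sof : (Fin (m + 1) → Fin (s + 2)) → Finset (Fin (m + 1)) :=
    fun f => Finset.univ.filter fun j => f j = Fin.last (s + 1)
  let F : (Fin (m + 1) → Fin (s + 2)) → Finset (Fin (m + 1)) × (Fin m → Fin (s + 1)) :=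
    fun f =>
      if h : (Sof f).Nonempty then
        (Sof f, fun i => trunc s (f (((Sof f).min' h).succAbove i)))
      else (∅, fun _ => 0)
  have key : theta (s + 1) r (m + 1) ≤ (P ×ˢ G).card := by
    apply Finset.card_le_card_of_injOn F
    · intro f hf
      rw [Finset.mem_coe, Finset.mem_filter] at hf
      have hf := hf.2
      have hlast : (Fin.last (s + 1)).val ≠ 0 := by simp
      have hcard := hf (Fin.last (s + 1)) hlast
      have hne : (Sof f).Nonempty := Finset.card_pos.mp hcard.1
      set p : Fin (m + 1) := (Sof f).min' hne with hp
      have hpmem : p ∈ Sof f := (Sof f).min'_mem hne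
      have hfp : f p = Fin.last (s + 1) := by
        simpa [Sof] using hpmem
      rw [show F f = (Sof f, fun i => trunc s (f (p.succAbove i))) from dif_pos hne]
      rw [Finset.mem_coe, Finset.mem_product]
      constructor
      · rw [hP, Finset.mem_biUnion]
        exact ⟨(Sof f).card, Finset.mem_Icc.2 ⟨hcard.1, hcard.2⟩,
          Finset.mem_powersetCard_univ.2 rfl⟩
      · rw [hG, Finset.mem_filter]
        refine ⟨Finset.mem_univ _, fun ℓ hℓ => ?_⟩
        have hcount :
            (Finset.univ.filter fun i : Fin m => trunc s (f (p.succAbove i)) = ℓ).card =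
            (Finset.univ.filter fun j : Fin (m + 1) => f j = Fin.castSucc ℓ).card := by
          apply Finset.card_bij (fun i _ => p.succAbove i)
          · intro i hi
            rw [Finset.mem_filter] at hi ⊢
            exact ⟨Finset.mem_univ _, (trunc_eq_iff s ℓ hℓ _).1 hi.2⟩
          · intro a _ b _ hab
            exact Fin.succAbove_right_injective hab
          · intro j hj
            rw [Finset.mem_filter] at hj
            have hjp : j ≠ p := by
              intro h; rw [h, hfp] at hj
              have := congrArg Fin.val hj.2
              simp [Fin.last] at this
              omega
            obtain ⟨i, hi⟩ := Fin.exists_succAbove_eq hjp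
            refine ⟨i, Finset.mem_filter.2 ⟨Finset.mem_univ _, ?_⟩, hi⟩
            rw [hi, (trunc_eq_iff s ℓ hℓ _)]
            exact hj.2
        rw [hcount]
        have hcs : (Fin.castSucc ℓ).val ≠ 0 := by simpa using hℓ
        exact hf (Fin.castSucc ℓ) hcs
    · intro f1 hf1 f2 hf2 hF
      simp only [Finset.coe_filter, Set.mem_setOf_eq] at hf1 hf2
      have hne1 : (Sof f1).Nonempty := by
        refine Finset.card_pos.mp (hf1.2 (Fin.last (s + 1)) (by simp)).1
      have hne2 : (Sof f2).Nonempty := by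
        refine Finset.card_pos.mp (hf2.2 (Fin.last (s + 1)) (by simp)).1
      rw [show F f1 = (Sof f1, fun i => trunc s (f1 (((Sof f1).min' hne1).succAbove i)))
        from dif_pos hne1,
        show F f2 = (Sof f2, fun i => trunc s (f2 (((Sof f2).min' hne2).succAbove i)))
        from dif_pos hne2, Prod.mk.injEq] at hF
      obtain ⟨hS, hg⟩ := hF
      have hpeq : (Sof f1).min' hne1 = (Sof f2).min' hne2 := by
        congr 1
      set p := (Sof f1).min' hne1 with hp
      funext j
      by_cases hjS : j ∈ Sof f1
      · have hjS2 : j ∈ Sof f2 := hS ▸ hjS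
        have h1 : f1 j = Fin.last (s + 1) := by simpa [Sof] using hjS
        have h2 : f2 j = Fin.last (s + 1) := by simpa [Sof] using hjS2
        rw [h1, h2]
      · have hjS2 : j ∉ Sof f2 := hS ▸ hjS
        have h1 : f1 j ≠ Fin.last (s + 1) := by simpa [Sof] using hjS
        have h2 : f2 j ≠ Fin.last (s + 1) := by simpa [Sof] using hjS2
        have hjp : j ≠ p := by
          intro h
          apply h1
          have : p ∈ Sof f1 := (Sof f1).min'_mem hne1
          rw [h]; simpa [Sof] using this
        obtain ⟨i, hi⟩ := Fin.exists_succAbove_eq hjp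
        have := congrFun hg i
        rw [← hpeq] at this
        rw [hi] at this
        exact trunc_inj s h1 h2 this
  calc theta (s + 1) r (m + 1) ≤ (P ×ˢ G).card := key
    _ = (∑ j ∈ Finset.Icc 1 r, (m + 1).choose j) * theta s r m := by
        rw [Finset.card_product, hPcard, hGcard]

/-- For `t ≥ 1`, `r ≥ 1` and `n ≥ 2r − 1`,
`θ_{t,r}(n) ≤ (C(n,1)+⋯+C(n,r))·θ_{t−1,r}(n−1) ≤ r·C(n,r)·θ_{t−1,r}(n−1)`. -/
theorem theta_recursion_bound (n t r : ℕ) (ht : 1 ≤ t) (hr : 1 ≤ r)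
    (hn : 2 * r - 1 ≤ n) :
    theta t r n ≤ (∑ j ∈ Finset.Icc 1 r, n.choose j) * theta (t - 1) r (n - 1) ∧
      (∑ j ∈ Finset.Icc 1 r, n.choose j) * theta (t - 1) r (n - 1) ≤
        r * n.choose r * theta (t - 1) r (n - 1) := by
  obtain ⟨s, rfl⟩ : ∃ s, t = s + 1 := ⟨t - 1, by omega⟩
  obtain ⟨m, rfl⟩ : ∃ m, n = m + 1 := ⟨n - 1, by omega⟩
  simp only [Nat.add_sub_cancel]
  constructor
  · exact main_step s r m
  · apply Nat.mul_le_mul_right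
    calc ∑ j ∈ Finset.Icc 1 r, (m + 1).choose j
        ≤ ∑ _j ∈ Finset.Icc 1 r, (m + 1).choose r := by
          apply Finset.sum_le_sum
          intro j hj
          rw [Finset.mem_Icc] at hj
          exact choose_le_choose_of (m + 1) j r hj.2 (by omega)
      _ = r * (m + 1).choose r := by
          rw [Finset.sum_const, Nat.card_Icc]
          simp [Nat.mul_comm]
end

section
/- For all integers t ≥ 0 and n ≥ t, θ_{t,2}(n) = n! · Σ_{i=0}^{min(t, n−t)} C(t,i) / (2^i · (n−t−i)!), as an identity of rational numbers. -/
open Finset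

def thetaSet (t r n : ℕ) : Finset (Fin n → Fin (t + 1)) :=
  Finset.univ.filter fun f : Fin n → Fin (t + 1) =>
    ∀ ℓ : Fin (t + 1), ℓ.val ≠ 0 →
      1 ≤ (Finset.univ.filter fun j : Fin n => f j = ℓ).card ∧
      (Finset.univ.filter fun j : Fin n => f j = ℓ).card ≤ r

lemma theta_zero' (r n : ℕ) : (thetaSet 0 r n).card = 1 := by
  unfold thetaSet
  rw [Finset.filter_true_of_mem, Finset.card_univ]
  · simp
  · intro f _ ℓ hℓ
    exact absurd (Fin.val_eq_zero ℓ) hℓ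

lemma theta_lt' (t r n : ℕ) (h : n < t) : (thetaSet t r n).card = 0 := by
  rw [Finset.card_eq_zero]
  unfold thetaSet
  rw [Finset.filter_eq_empty_iff]
  intro f _ hf
  have h1 : (Finset.univ : Finset (Fin n)).card =
      ∑ ℓ ∈ (Finset.univ : Finset (Fin (t + 1))),
        (Finset.univ.filter fun j => f j = ℓ).card :=
    Finset.card_eq_sum_card_fiberwise (fun x _ => mem_univ _)
  have h2 : ((Finset.univ : Finset (Fin (t + 1))).erase 0).card ≤
      ∑ ℓ ∈ (Finset.univ : Finset (Fin (t + 1))).erase 0,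
        (Finset.univ.filter fun j => f j = ℓ).card := by
    rw [Finset.card_eq_sum_ones]
    refine Finset.sum_le_sum fun ℓ hℓ => ?_
    have hℓ0 : ℓ.val ≠ 0 := by
      intro hv
      exact (Finset.mem_erase.1 hℓ).1 (Fin.ext hv)
    exact (hf ℓ hℓ0).1
  have h3 : ∑ ℓ ∈ (Finset.univ : Finset (Fin (t + 1))).erase 0,
        (Finset.univ.filter fun j => f j = ℓ).card ≤
      ∑ ℓ ∈ (Finset.univ : Finset (Fin (t + 1))),
        (Finset.univ.filter fun j => f j = ℓ).card :=
    Finset.sum_le_sum_of_subset (Finset.erase_subset _ _)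
  simp only [Finset.card_erase_of_mem (mem_univ _), Finset.card_univ, Fintype.card_fin] at h2 h1
  omega

lemma filter_card_transfer {n m : ℕ} (A : Finset (Fin n)) (e : ↥(Aᶜ : Finset (Fin n)) ≃ Fin m)
    (p : Fin n → Prop) (q : Fin m → Prop) [DecidablePred p] [DecidablePred q]
    (hpq : ∀ x : ↥(Aᶜ : Finset (Fin n)), (p ↑x ↔ q (e x)))
    (hA : ∀ x ∈ A, ¬ p x) :
    (Finset.univ.filter p).card = (Finset.univ.filter q).card := by
  refine Finset.card_bij'
    (fun x hx => e ⟨x, Finset.mem_compl.2 fun hxA =>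
      hA x hxA (by simpa using hx)⟩)
    (fun b _ => ↑(e.symm b)) ?_ ?_ ?_ ?_
  · intro x hx
    simp only [Finset.mem_filter, Finset.mem_univ, true_and] at hx ⊢
    exact (hpq _).1 hx
  · intro b hb
    simp only [Finset.mem_filter, Finset.mem_univ, true_and] at hb ⊢
    rw [hpq (e.symm b), Equiv.apply_symm_apply]
    exact hb
  · intro x _
    simp
  · intro b _
    simp

lemma inner_card (t n : ℕ) (A : Finset (Fin n)) (h1 : 1 ≤ A.card) (h2 : A.card ≤ 2) :
    ((thetaSet (t + 1) 2 n).filter fun f =>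
        (Finset.univ.filter fun x => f x = Fin.last (t + 1)) = A).card
      = (thetaSet t 2 (n - A.card)).card := by
  classical
  have hc : (Aᶜ : Finset (Fin n)).card = n - A.card := by
    simp [Finset.card_compl]
  let e : ↥(Aᶜ : Finset (Fin n)) ≃ Fin (n - A.card) :=
    (Aᶜ : Finset (Fin n)).equivFin.trans (finCongr hc)
  set I : (Fin n → Fin (t + 2)) → (Fin (n - A.card) → Fin (t + 1)) :=
    fun f p => if h : f ((e.symm p : ↥(Aᶜ : Finset (Fin n))) : Fin n) = Fin.last (t + 1)
      then 0 else Fin.castPred _ h with hI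
  set J : (Fin (n - A.card) → Fin (t + 1)) → (Fin n → Fin (t + 2)) :=
    fun g x => if h : x ∈ A then Fin.last (t + 1)
      else (g (e ⟨x, Finset.mem_compl.2 h⟩)).castSucc with hJ
  refine Finset.card_nbij' I J ?_ ?_ ?_ ?_
  · -- I maps into thetaSet t 2 (n - A.card)
    intro f hf
    rw [Finset.mem_coe, Finset.mem_filter] at hf
    obtain ⟨hf1, hf2⟩ := hf
    simp only [thetaSet, Finset.mem_filter, Finset.mem_univ, true_and] at hf1
    have hmem : ∀ x, f x = Fin.last (t + 1) ↔ x ∈ A := by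
      intro x
      rw [← hf2]
      simp
    rw [thetaSet, Finset.mem_coe, Finset.mem_filter]
    refine ⟨Finset.mem_univ _, fun ℓ hℓ => ?_⟩
    have hcard : (Finset.univ.filter fun x : Fin n => f x = ℓ.castSucc).card =
        (Finset.univ.filter fun p => I f p = ℓ).card := by
      refine filter_card_transfer A e _ _ (fun x => ?_) (fun x hxA => ?_)
      · have hne : f ↑x ≠ Fin.last (t + 1) := fun hl => by
          have := (hmem ↑x).1 hl
          exact (Finset.mem_compl.1 x.2) this
        simp only [hI, Equiv.symm_apply_apply, dif_neg hne]
        constructor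
        · intro hx
          apply Fin.castSucc_injective
          rwa [Fin.castSucc_castPred]
        · intro hx
          rw [← hx, Fin.castSucc_castPred]
      · intro hfx
        have : f x = Fin.last (t + 1) := (hmem x).2 hxA
        rw [this] at hfx
        exact (Fin.castSucc_lt_last ℓ).ne' hfx
    have := hf1 ℓ.castSucc (by simpa using hℓ)
    rw [hcard] at this
    exact this
  · -- J maps into the filtered set
    intro g hg
    simp only [thetaSet, Finset.mem_coe, Finset.mem_filter, Finset.mem_univ, true_and] at hg
    have hlast : ∀ x, J g x = Fin.last (t + 1) ↔ x ∈ A := by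
      intro x
      by_cases hx : x ∈ A
      · simp [hJ, hx]
      · simp only [hJ, dif_neg hx]
        exact ⟨fun hl => absurd hl (Fin.castSucc_lt_last _).ne, fun hl => absurd hl hx⟩
    rw [Finset.mem_coe, Finset.mem_filter]
    constructor
    · simp only [thetaSet, Finset.mem_filter, Finset.mem_univ, true_and]
      intro ℓ hℓ
      by_cases hℓlast : ℓ = Fin.last (t + 1)
      · have : (Finset.univ.filter fun x => J g x = ℓ) = A := by
          ext x
          simp only [Finset.mem_filter, Finset.mem_univ, true_and, hℓlast]
          exact hlast x
        rw [this]
        exact ⟨h1, h2⟩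
      · set ℓ' := ℓ.castPred hℓlast with hℓ'
        have hcs : ℓ'.castSucc = ℓ := Fin.castSucc_castPred _ _
        have hcard : (Finset.univ.filter fun x : Fin n => J g x = ℓ).card =
            (Finset.univ.filter fun p => g p = ℓ').card := by
          refine filter_card_transfer A e _ _ (fun x => ?_) (fun x hxA => ?_)
          · have hx : (x : Fin n) ∉ A := Finset.mem_compl.1 x.2
            simp only [hJ, dif_neg hx, Subtype.coe_eta]
            rw [← hcs]
            exact ⟨fun h => Fin.castSucc_injective _ h, fun h => by rw [h]⟩
          · intro hfx
            rw [(hlast x).2 hxA] at hfx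
            exact hℓlast hfx.symm
        rw [hcard]
        refine hg ℓ' ?_
        have : ℓ'.val = ℓ.val := rfl
        omega
    · ext x
      simp only [Finset.mem_filter, Finset.mem_univ, true_and]
      exact hlast x
  · -- left inverse
    intro f hf
    rw [Finset.mem_coe, Finset.mem_filter] at hf
    obtain ⟨_, hf2⟩ := hf
    have hmem : ∀ x, f x = Fin.last (t + 1) ↔ x ∈ A := by
      intro x
      rw [← hf2]
      simp
    funext x
    by_cases hx : x ∈ A
    · simp only [hJ, dif_pos hx]
      exact ((hmem x).2 hx).symm
    · simp only [hJ, dif_neg hx, hI, Equiv.symm_apply_apply]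
      have hne : f x ≠ Fin.last (t + 1) := fun hl => hx ((hmem x).1 hl)
      simp only [dif_neg hne]
      exact Fin.castSucc_castPred _ _
  · -- right inverse
    intro g _
    funext p
    have hx : ((e.symm p : ↥(Aᶜ : Finset (Fin n))) : Fin n) ∉ A :=
      Finset.mem_compl.1 (e.symm p).2
    simp only [hI, hJ, dif_neg hx, Subtype.coe_eta, Equiv.apply_symm_apply]
    have hne : (g p).castSucc ≠ Fin.last (t + 1) := (Fin.castSucc_lt_last _).ne
    simp only [dif_neg hne]
    exact Fin.castPred_castSucc _

lemma theta_succ (t n : ℕ) : (thetaSet (t + 1) 2 n).card =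
    n * (thetaSet t 2 (n - 1)).card + n.choose 2 * (thetaSet t 2 (n - 2)).card := by
  classical
  set B := (Finset.univ : Finset (Fin n)).powersetCard 1 ∪
    (Finset.univ : Finset (Fin n)).powersetCard 2 with hB
  have hmap : ∀ f ∈ thetaSet (t + 1) 2 n,
      (Finset.univ.filter fun x => f x = Fin.last (t + 1)) ∈ B := by
    intro f hf
    simp only [thetaSet, Finset.mem_filter, Finset.mem_univ, true_and] at hf
    have := hf (Fin.last (t + 1)) (by simp [Fin.val_last])
    simp only [hB, Finset.mem_union, Finset.mem_powersetCard_univ]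
    omega
  rw [Finset.card_eq_sum_card_fiberwise hmap]
  have hdisj : Disjoint ((Finset.univ : Finset (Fin n)).powersetCard 1)
      ((Finset.univ : Finset (Fin n)).powersetCard 2) := by
    rw [Finset.disjoint_left]
    intro A hA1 hA2
    rw [Finset.mem_powersetCard_univ] at hA1 hA2
    omega
  rw [hB, Finset.sum_union hdisj]
  have e1 : ∀ A ∈ (Finset.univ : Finset (Fin n)).powersetCard 1,
      ((thetaSet (t + 1) 2 n).filter fun f =>
        (Finset.univ.filter fun x => f x = Fin.last (t + 1)) = A).card
      = (thetaSet t 2 (n - 1)).card := by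
    intro A hA
    rw [Finset.mem_powersetCard_univ] at hA
    rw [inner_card t n A (by omega) (by omega), hA]
  have e2 : ∀ A ∈ (Finset.univ : Finset (Fin n)).powersetCard 2,
      ((thetaSet (t + 1) 2 n).filter fun f =>
        (Finset.univ.filter fun x => f x = Fin.last (t + 1)) = A).card
      = (thetaSet t 2 (n - 2)).card := by
    intro A hA
    rw [Finset.mem_powersetCard_univ] at hA
    rw [inner_card t n A (by omega) (by omega), hA]
  rw [Finset.sum_congr rfl e1, Finset.sum_congr rfl e2, Finset.sum_const, Finset.sum_const,
    Finset.card_powersetCard, Finset.card_powersetCard, Finset.card_univ, Fintype.card_fin,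
    Nat.choose_one_right, smul_eq_mul, smul_eq_mul]

noncomputable def Rfun (m i : ℕ) : ℚ :=
  if i ≤ m then 1 / (2 ^ i * ((m - i).factorial : ℚ)) else 0

noncomputable def Rsum (t n : ℕ) : ℚ :=
  ∑ i ∈ Finset.range (t + 1), (t.choose i : ℚ) * Rfun (n - t) i

lemma Rfun_succ (m i : ℕ) (hm : 1 ≤ m) : Rfun m (i + 1) = 1 / 2 * Rfun (m - 1) i := by
  unfold Rfun
  by_cases h : i + 1 ≤ m
  · rw [if_pos h, if_pos (by omega)]
    have h2 : m - (i + 1) = m - 1 - i := by omega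
    rw [h2, pow_succ]
    have := Nat.factorial_pos (m - 1 - i)
    field_simp
  · rw [if_neg h, if_neg (by omega)]
    ring

lemma Rsum_self (t : ℕ) : Rsum t t = 1 := by
  unfold Rsum
  rw [Finset.sum_eq_single 0]
  · simp [Rfun]
  · intro i _ hi
    have : ¬ i ≤ t - t := by omega
    rw [Rfun, if_neg this, mul_zero]
  · intro h
    exact absurd (Finset.mem_range.2 (by omega)) h

lemma Rsum_rec (t n : ℕ) (h : t + 2 ≤ n) :
    Rsum (t + 1) n = Rsum t (n - 1) + 1 / 2 * Rsum t (n - 2) := by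
  have hm1 : n - (t + 1) = n - 1 - t := by omega
  have hm2 : 1 ≤ n - 1 - t := by omega
  have hm3 : n - 2 - t = n - 1 - t - 1 := by omega
  set m := n - 1 - t with hm
  unfold Rsum
  rw [hm1, hm3]
  rw [Finset.sum_range_succ' (fun i => ((t + 1).choose i : ℚ) * Rfun m i)]
  rw [Finset.sum_range_succ' (fun i => (t.choose i : ℚ) * Rfun m i)]
  have key : ∀ i, (((t + 1).choose (i + 1) : ℕ) : ℚ) * Rfun m (i + 1)
      = (t.choose (i + 1) : ℚ) * Rfun m (i + 1)
        + (t.choose i : ℚ) * (1 / 2 * Rfun (m - 1) i) := by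
    intro i
    rw [← Rfun_succ m i hm2, Nat.choose_succ_succ]
    push_cast
    ring
  rw [Finset.sum_congr rfl fun i _ => key i, Finset.sum_add_distrib]
  have hlastzero : ((t.choose (t + 1) : ℕ) : ℚ) * Rfun m (t + 1) = 0 := by
    rw [Nat.choose_succ_self]
    push_cast
    ring
  rw [Finset.sum_range_succ (fun i => (t.choose (i + 1) : ℚ) * Rfun m (i + 1)) t] at *
  simp only [Nat.choose_zero_right, Nat.cast_one, hlastzero, add_zero]
  have hcomm : ∀ i ∈ Finset.range (t + 1),
      (t.choose i : ℚ) * (1 / 2 * Rfun (m - 1) i)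
        = 1 / 2 * ((t.choose i : ℚ) * Rfun (m - 1) i) := fun i _ => by ring
  rw [Finset.mul_sum, Finset.sum_congr rfl hcomm]
  ring

lemma key (t : ℕ) : ∀ n : ℕ, t ≤ n →
    ((thetaSet t 2 n).card : ℚ) = (n.factorial : ℚ) * Rsum t n := by
  induction t with
  | zero =>
    intro n _
    rw [theta_zero']
    unfold Rsum
    rw [Finset.sum_range_one]
    simp only [Nat.choose_zero_right, Nat.cast_one, one_mul, Rfun, Nat.zero_le, if_pos,
      Nat.sub_zero, pow_zero, one_mul]
    have := Nat.factorial_pos n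
    have hne : ((n.factorial : ℕ) : ℚ) ≠ 0 := by positivity
    field_simp
  | succ t ih =>
    intro n hn
    have hrec := theta_succ t n
    have hcast : ((thetaSet (t + 1) 2 n).card : ℚ) =
        (n : ℚ) * (thetaSet t 2 (n - 1)).card
          + (n.choose 2 : ℚ) * (thetaSet t 2 (n - 2)).card := by
      rw [hrec]
      push_cast
      ring
    by_cases hcase : n = t + 1
    · subst hcase
      have hterm2 : ((t + 1).choose 2 : ℚ) * ((thetaSet t 2 (t + 1 - 2)).card : ℚ) = 0 := by
        rcases Nat.eq_zero_or_pos t with h0 | h0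
        · subst h0
          norm_num
        · rw [theta_lt' t 2 (t + 1 - 2) (by omega)]
          simp
      rw [hcast, hterm2, add_zero, ih (t + 1 - 1) (by omega)]
      have h1 : t + 1 - 1 = t := by omega
      rw [h1, Rsum_self, Rsum_self]
      push_cast [Nat.factorial_succ]
      ring
    · have h2 : t + 2 ≤ n := by omega
      rw [hcast, ih (n - 1) (by omega), ih (n - 2) (by omega), Rsum_rec t n h2]
      have hf1 : (n : ℚ) * ((n - 1).factorial : ℚ) = (n.factorial : ℚ) := by
        rw_mod_cast [Nat.mul_factorial_pred (by omega)]
      have hf2 : ((n.choose 2 : ℕ) : ℚ) * (((n - 2).factorial : ℕ) : ℚ)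
          = (n.factorial : ℚ) / 2 := by
        have h := Nat.choose_mul_factorial_mul_factorial (show 2 ≤ n by omega)
        have h' : ((n.choose 2 * Nat.factorial 2 * (n - 2).factorial : ℕ) : ℚ)
            = (n.factorial : ℚ) := by exact_mod_cast congrArg (Nat.cast : ℕ → ℚ) h
        push_cast at h'
        rw [show (Nat.factorial 2 : ℚ) = 2 by norm_num] at h'
        linarith
      linear_combination (Rsum t (n - 1)) * hf1 + (Rsum t (n - 2)) * hf2

lemma Rsum_eq_target (t n : ℕ) (h : t ≤ n) :
    Rsum t n = ∑ i ∈ Finset.range (min t (n - t) + 1),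
      (t.choose i : ℚ) / (2 ^ i * ((n - t - i).factorial : ℚ)) := by
  unfold Rsum
  rw [← Finset.sum_subset (Finset.range_subset_range.2 (by omega : min t (n - t) + 1 ≤ t + 1))]
  · apply Finset.sum_congr rfl
    intro i hi
    rw [Finset.mem_range] at hi
    have hle : i ≤ n - t := by omega
    rw [Rfun, if_pos hle, mul_one_div]
  · intro i hi hni
    rw [Finset.mem_range] at hi
    rw [Finset.mem_range, not_lt] at hni
    have hle : ¬ i ≤ n - t := by omega
    rw [Rfun, if_neg hle, mul_zero]

/-- For `t ≥ 0` and `n ≥ t`: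
`θ_{t,2}(n) = n! · Σ_{i=0}^{min(t, n−t)} C(t,i) / (2^i · (n−t−i)!)` in `ℚ`. -/
theorem theta_two_formula (n t : ℕ) (h : t ≤ n) :
    (theta t 2 n : ℚ) =
      (n.factorial : ℚ) *
        ∑ i ∈ Finset.range (min t (n - t) + 1),
          (t.choose i : ℚ) / (2 ^ i * ((n - t - i).factorial : ℚ)) := by
  have : theta t 2 n = (thetaSet t 2 n).card := rfl
  rw [this, key t n h, Rsum_eq_target t n h]
end

section
/- For all integers t ≥ 0 and n ≥ t, θ_{t,2}(n) ≤ (n)_t · (n − t + 2)^t / 2^t, where the right-hand side is interpreted as a real number. -/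
namespace ThetaAux


variable {n t : ℕ}

def Good (f : Fin n → Fin (t + 1)) : Prop :=
  ∀ ℓ : Fin (t + 1), ℓ.val ≠ 0 →
      1 ≤ (Finset.univ.filter fun j : Fin n => f j = ℓ).card ∧
      (Finset.univ.filter fun j : Fin n => f j = ℓ).card ≤ 2

instance : DecidablePred (Good (n := n) (t := t)) := fun _ => by
  unfold Good; infer_instance

def fib (f : Fin n → Fin (t + 1)) (i : Fin t) : Finset (Fin n) :=
  Finset.univ.filter fun j => f j = i.succ

lemma mem_fib {f : Fin n → Fin (t + 1)} {i : Fin t} {j : Fin n} :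
    j ∈ fib f i ↔ f j = i.succ := by simp [fib]

lemma fib_card {f : Fin n → Fin (t + 1)} (hf : Good f) (i : Fin t) :
    1 ≤ (fib f i).card ∧ (fib f i).card ≤ 2 :=
  hf i.succ (by simp [Fin.val_succ])

lemma fib_nonempty {f : Fin n → Fin (t + 1)} (hf : Good f) (i : Fin t) :
    (fib f i).Nonempty := Finset.card_pos.mp (fib_card hf i).1

lemma fib_eq_of_mem {f : Fin n → Fin (t + 1)} {i i' : Fin t} {j : Fin n}
    (h1 : j ∈ fib f i) (h2 : j ∈ fib f i') : i = i' := by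
  rw [mem_fib] at h1 h2
  exact Fin.succ_injective _ (h1 ▸ h2)

def pick (d : Fin n) (b : Bool) (s : Finset (Fin n)) : Fin n :=
  if h : s.Nonempty then (if b then s.max' h else s.min' h) else d

lemma pick_mem (d : Fin n) (b : Bool) {s : Finset (Fin n)} (h : s.Nonempty) :
    pick d b s ∈ s := by
  rw [pick, dif_pos h]
  cases b <;> simp [Finset.min'_mem, Finset.max'_mem]

lemma pick_order (d : Fin n) {s : Finset (Fin n)} (h : 1 < s.card) :
    pick d false s < pick d true s := by
  have hne : s.Nonempty := Finset.card_pos.mp (by omega)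
  rw [pick, pick, dif_pos hne, dif_pos hne]
  simpa using Finset.min'_lt_max'_of_card s h

lemma pick_lt_pick (d : Fin n) {s : Finset (Fin n)} (h : 1 < s.card) (b : Bool) :
    pick d (!b) s < pick d b s ∨ pick d b s < pick d (!b) s := by
  have hne : s.Nonempty := Finset.card_pos.mp (by omega)
  have hlt := Finset.min'_lt_max'_of_card s h
  rw [pick, pick, dif_pos hne, dif_pos hne]
  cases b <;> simp [hlt]

def U (d : Fin n) (f : Fin n → Fin (t + 1)) (ε : Fin t → Bool) (i : Fin t) : Fin n :=
  pick d (ε i) (fib f i)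

def O (d : Fin n) (f : Fin n → Fin (t + 1)) (ε : Fin t → Bool) (i : Fin t) : Fin n :=
  pick d (!ε i) (fib f i)

lemma U_mem {f : Fin n → Fin (t + 1)} (hf : Good f) (d : Fin n) (ε : Fin t → Bool)
    (i : Fin t) : U d f ε i ∈ fib f i := pick_mem d _ (fib_nonempty hf i)

lemma O_mem {f : Fin n → Fin (t + 1)} (hf : Good f) (d : Fin n) (ε : Fin t → Bool)
    (i : Fin t) : O d f ε i ∈ fib f i := pick_mem d _ (fib_nonempty hf i)

lemma U_inj {f : Fin n → Fin (t + 1)} (hf : Good f) (d : Fin n) (ε : Fin t → Bool) :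
    Function.Injective (U d f ε) := by
  intro i i' hii
  exact fib_eq_of_mem (U_mem hf d ε i) (hii ▸ U_mem hf d ε i')

lemma O_ne_U {f : Fin n → Fin (t + 1)} (d : Fin n) (ε : Fin t → Bool)
    {i : Fin t} (h2 : (fib f i).card = 2) : O d f ε i ≠ U d f ε i := by
  rcases pick_lt_pick d (s := fib f i) (by omega) (ε i) with h | h
  · exact ne_of_lt h
  · exact ne_of_gt h

def cmpl (u : Fin t → Fin n) : Finset (Fin n) :=
  Finset.univ \ Finset.image u Finset.univ

lemma card_cmpl {u : Fin t → Fin n} (hu : Function.Injective u) :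
    (cmpl u).card = n - t := by
  rw [cmpl, Finset.card_sdiff_of_subset (Finset.subset_univ _), Finset.card_image_of_injective _ hu]
  simp

lemma O_mem_cmpl {f : Fin n → Fin (t + 1)} (hf : Good f) (d : Fin n) (ε : Fin t → Bool)
    {i : Fin t} (h2 : (fib f i).card = 2) : O d f ε i ∈ cmpl (U d f ε) := by
  rw [cmpl, Finset.mem_sdiff]
  refine ⟨Finset.mem_univ _, ?_⟩
  rw [Finset.mem_image]
  rintro ⟨j, -, hj⟩
  have hji : j = i := fib_eq_of_mem (hj ▸ U_mem hf d ε j) (O_mem hf d ε i)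
  subst hji
  exact O_ne_U d ε h2 hj.symm

def rk (u : Fin t → Fin n) (x : Fin n) : ℕ := ((cmpl u).filter fun y => y < x).card

lemma rk_lt {u : Fin t → Fin n} {x : Fin n} (hx : x ∈ cmpl u) :
    rk u x < (cmpl u).card := by
  apply Finset.card_lt_card
  constructor
  · exact Finset.filter_subset _ _
  · intro hsub
    have := hsub hx
    rw [Finset.mem_filter] at this
    exact lt_irrefl x this.2

lemma rk_lt_rk {u : Fin t → Fin n} {x y : Fin n} (hx : x ∈ cmpl u) (hxy : x < y) :
    rk u x < rk u y := by
  apply Finset.card_lt_card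
  constructor
  · intro z hz
    rw [Finset.mem_filter] at hz ⊢
    exact ⟨hz.1, lt_trans hz.2 hxy⟩
  · intro hsub
    have := hsub (Finset.mem_filter.mpr ⟨hx, hxy⟩)
    rw [Finset.mem_filter] at this
    exact lt_irrefl x this.2

lemma rk_injOn {u : Fin t → Fin n} {x y : Fin n} (hx : x ∈ cmpl u) (hy : y ∈ cmpl u)
    (hr : rk u x = rk u y) : x = y := by
  rcases lt_trichotomy x y with hlt | heq | hlt
  · exact absurd hr (Nat.ne_of_lt (rk_lt_rk hx hlt))
  · exact heq
  · exact absurd hr.symm (Nat.ne_of_lt (rk_lt_rk hy hlt))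

def V (d : Fin n) (f : Fin n → Fin (t + 1)) (ε : Fin t → Bool) (i : Fin t) : ℕ :=
  if (fib f i).card = 1 then (if ε i then 1 else 0)
  else 2 + rk (U d f ε) (O d f ε i)

lemma fib_eq_doubleton {f : Fin n → Fin (t + 1)} (hf : Good f) (d : Fin n)
    (ε : Fin t → Bool) {i : Fin t} (h2 : (fib f i).card = 2) :
    fib f i = {U d f ε i, O d f ε i} := by
  have hsub : ({U d f ε i, O d f ε i} : Finset (Fin n)) ⊆ fib f i := by
    intro x hx
    rcases Finset.mem_insert.mp hx with rfl | hx
    · exact U_mem hf d ε i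
    · exact (Finset.mem_singleton.mp hx) ▸ O_mem hf d ε i
  have hcard : (({U d f ε i, O d f ε i} : Finset (Fin n))).card = 2 := by
    rw [Finset.card_insert_of_notMem (by simp [(O_ne_U d ε h2).symm]), Finset.card_singleton]
  exact (Finset.eq_of_subset_of_card_le hsub (by omega)).symm

lemma fib_eq_singleton {f : Fin n → Fin (t + 1)} (hf : Good f) (d : Fin n)
    (ε : Fin t → Bool) {i : Fin t} (h1 : (fib f i).card = 1) :
    fib f i = {U d f ε i} := by
  obtain ⟨a, ha⟩ := Finset.card_eq_one.mp h1
  have := U_mem hf d ε i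
  rw [ha] at this ⊢
  simp_all

end ThetaAux

open ThetaAux in
theorem theta_key (n t : ℕ) (h : t ≤ n) (hn : 0 < n) :
    theta t 2 n * 2 ^ t ≤ n.descFactorial t * (n - t + 2) ^ t := by
  classical
  set d : Fin n := ⟨0, hn⟩ with hd
  have htheta : theta t 2 n = (Finset.univ.filter (Good (n := n) (t := t))).card := by
    rw [theta]
    congr 1
  have hcardD : ((Finset.univ.filter (Good (n := n) (t := t))) ×ˢ
      (Finset.univ : Finset (Fin t → Bool))).card = theta t 2 n * 2 ^ t := by
    rw [Finset.card_product, Finset.card_univ, htheta]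
    congr 1
    simp
  have hcardT : (((Finset.univ : Finset (Fin t → Fin n)).filter
        fun u => Function.Injective u) ×ˢ
      (Fintype.piFinset fun _ : Fin t => Finset.range (n - t + 2))).card
      = n.descFactorial t * (n - t + 2) ^ t := by
    rw [Finset.card_product, Fintype.card_piFinset]
    congr 1
    · rw [← Fintype.card_subtype]
      rw [Fintype.card_congr (Equiv.subtypeInjectiveEquivEmbedding (Fin t) (Fin n))]
      rw [Fintype.card_embedding_eq]
      simp
    · simp
  rw [← hcardD, ← hcardT]
  apply Finset.card_le_card_of_injOn (fun p => (U d p.1 p.2, V d p.1 p.2))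
  · rintro ⟨f, ε⟩ hp
    rw [Finset.mem_coe, Finset.mem_product, Finset.mem_filter] at hp
    have hf : Good f := hp.1.2
    rw [Finset.mem_coe, Finset.mem_product, Finset.mem_filter]
    refine ⟨⟨Finset.mem_univ _, U_inj hf d ε⟩, ?_⟩
    rw [Fintype.mem_piFinset]
    intro i
    rw [Finset.mem_range]
    have hcc : (cmpl (U d f ε)).card = n - t := card_cmpl (U_inj hf d ε)
    by_cases h1 : (fib f i).card = 1
    · simp only [V, if_pos h1]
      split <;> omega
    · have h2 : (fib f i).card = 2 := by have := fib_card hf i; omega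
      simp only [V, if_neg h1]
      have := rk_lt (O_mem_cmpl hf d ε h2)
      omega
  · rintro ⟨f, ε⟩ hp ⟨g, δ⟩ hq heq
    simp only [Finset.coe_filter, Set.mem_setOf_eq, Finset.mem_coe, Finset.mem_product,
      Finset.mem_filter, Finset.mem_univ, true_and] at hp hq
    have hf : Good f := hp.1
    have hg : Good g := hq.1
    simp only [Prod.mk.injEq] at heq
    obtain ⟨hU, hV⟩ := heq
    have key : ∀ i, fib f i = fib g i ∧ ε i = δ i := by
      intro i
      have hUi : U d f ε i = U d g δ i := congrFun hU i
      have hVi : V d f ε i = V d g δ i := congrFun hV i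
      by_cases h1f : (fib f i).card = 1 <;> by_cases h1g : (fib g i).card = 1
      · refine ⟨?_, ?_⟩
        · rw [fib_eq_singleton hf d ε h1f, fib_eq_singleton hg d δ h1g, hUi]
        · simp only [V, if_pos h1f, if_pos h1g] at hVi
          cases hε : ε i <;> cases hδ : δ i <;> rw [hε, hδ] at hVi <;> simp_all
      · exfalso
        simp only [V, if_pos h1f, if_neg h1g] at hVi
        split at hVi <;> omega
      · exfalso
        simp only [V, if_neg h1f, if_pos h1g] at hVi
        split at hVi <;> omega
      · have h2f : (fib f i).card = 2 := by have := fib_card hf i; omega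
        have h2g : (fib g i).card = 2 := by have := fib_card hg i; omega
        simp only [V, if_neg h1f, if_neg h1g] at hVi
        rw [hU] at hVi
        have hrk : rk (U d g δ) (O d f ε i) = rk (U d g δ) (O d g δ i) := by omega
        have hOf : O d f ε i ∈ cmpl (U d g δ) := by
          rw [← hU]; exact O_mem_cmpl hf d ε h2f
        have hOg : O d g δ i ∈ cmpl (U d g δ) := O_mem_cmpl hg d δ h2g
        have hO : O d f ε i = O d g δ i := rk_injOn hOf hOg hrk
        refine ⟨?_, ?_⟩
        · rw [fib_eq_doubleton hf d ε h2f, fib_eq_doubleton hg d δ h2g, hUi, hO]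
        · cases hε : ε i <;> cases hδ : δ i
          · rfl
          · exfalso
            have ha : U d f ε i < O d f ε i := by
              simpa [O, U, hε] using pick_order d (s := fib f i) (by omega)
            have hb : O d g δ i < U d g δ i := by
              simpa [O, U, hδ] using pick_order d (s := fib g i) (by omega)
            rw [← hUi, ← hO] at hb
            exact absurd (lt_trans ha hb) (lt_irrefl _)
          · exfalso
            have ha : O d f ε i < U d f ε i := by
              simpa [O, U, hε] using pick_order d (s := fib f i) (by omega)
            have hb : U d g δ i < O d g δ i := by
              simpa [O, U, hδ] using pick_order d (s := fib g i) (by omega)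
            rw [← hUi, ← hO] at hb
            exact absurd (lt_trans hb ha) (lt_irrefl _)
          · rfl
    have hfg : f = g := by
      funext j
      rcases Fin.eq_zero_or_eq_succ (f j) with hf0 | ⟨i, hfi⟩
      · rcases Fin.eq_zero_or_eq_succ (g j) with hg0 | ⟨i, hgi⟩
        · rw [hf0, hg0]
        · exfalso
          have : j ∈ fib g i := mem_fib.mpr hgi
          rw [← (key i).1] at this
          rw [mem_fib] at this
          rw [hf0] at this
          exact Fin.succ_ne_zero i this.symm
      · have : j ∈ fib f i := mem_fib.mpr hfi
        rw [(key i).1] at this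
        rw [mem_fib] at this
        rw [hfi, this]
    have hed : ε = δ := funext fun i => (key i).2
    rw [hfg, hed]


/-- For `t ≥ 0` and `n ≥ t`: `θ_{t,2}(n) ≤ (n)_t · (n − t + 2)^t / 2^t` (as reals). -/
theorem theta_two_upper_bound (n t : ℕ) (h : t ≤ n) :
    (theta t 2 n : ℝ) ≤
      (Nat.descFactorial n t : ℝ) * ((n : ℝ) - (t : ℝ) + 2) ^ t / 2 ^ t := by
  rcases Nat.eq_zero_or_pos n with rfl | hn
  · obtain rfl : t = 0 := Nat.le_zero.mp h
    have : theta 0 2 0 = 1 := by decide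
    rw [this]
    norm_num
  · have key := theta_key n t h hn
    rw [le_div_iff₀ (by positivity : (0:ℝ) < 2 ^ t)]
    have hcast : ((n - t + 2 : ℕ) : ℝ) = (n : ℝ) - (t : ℝ) + 2 := by
      push_cast [Nat.cast_sub h]
      ring
    rw [← hcast]
    exact_mod_cast key
end

section
/- For all integers t ≥ 0, r ≥ 1 and n ≥ t, θ_{t,r}(n) = (n)_t · Σ_𝐢 [ C(t; i₁,…,i_r) · (n−t)_{|𝐢|−t} / ((1!)^{i₁}(2!)^{i₂}⋯(r!)^{i_r}) ], where the sum ranges over all r-tuples 𝐢 = (i₁,…,i_r) of nonnegative integers with i₁ + i₂ + ⋯ + i_r = t and |𝐢| := i₁ + 2i₂ + ⋯ + r·i_r ≤ n, and C(t; i₁,…,i_r) = t!/(i₁!⋯i_r!) is a multinomial coefficient. The identity is between rational numbers. -/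
open Finset

private lemma card_filter_subtype {α : Type} (T : Finset α) (p : α → Prop)
    [DecidablePred p] :
    ((Finset.univ : Finset {a // a ∈ T}).filter fun x => p x.1).card = (T.filter p).card := by
  refine Finset.card_bij' (fun x _ => x.1) (fun a ha => ⟨a, (Finset.mem_filter.mp ha).1⟩)
    ?_ ?_ ?_ ?_ <;> simp +contextual [Finset.mem_filter]

private lemma card_prescribed_fibers_aux {β : Type} [Fintype β] [DecidableEq β] (s : Finset β) :
    ∀ (α : Type) [Fintype α] [DecidableEq α] (g : β → ℕ),
      (∑ b ∈ s, g b) = Fintype.card α →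
      (Finset.univ.filter fun f : α → β =>
          (∀ a, f a ∈ s) ∧ ∀ b ∈ s, (Finset.univ.filter fun a => f a = b).card = g b).card
        = Nat.multinomial s g := by
  induction s using Finset.cons_induction with
  | empty =>
      intro α _ _ g hg
      simp only [Finset.sum_empty] at hg
      have hα : IsEmpty α := Fintype.card_eq_zero_iff.mp hg.symm
      rw [Finset.filter_true_of_mem
        (fun f _ => ⟨fun a => (hα.false a).elim, fun b hb => absurd hb (Finset.notMem_empty b)⟩)]
      rw [Finset.card_univ, Fintype.card_fun, ← hg, pow_zero, Nat.multinomial_empty]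
  | cons b s hb ih =>
      intro α _ _ g hg
      rw [Finset.sum_cons] at hg
      have hgb : g b ≤ Fintype.card α := by omega
      rw [Finset.card_eq_sum_card_fiberwise
        (f := fun f : α → β => Finset.univ.filter fun a => f a = b)
        (t := Finset.powersetCard (g b) Finset.univ)
        (fun f hf => by
          rw [Finset.mem_coe, Finset.mem_powersetCard_univ]
          exact ((Finset.mem_filter.mp (Finset.mem_coe.mp hf)).2).2 b (Finset.mem_cons_self b s))]
      have key : ∀ T ∈ Finset.powersetCard (g b) Finset.univ,
          ((Finset.univ.filter fun f : α → β =>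
            ((∀ a, f a ∈ Finset.cons b s hb) ∧
              ∀ b' ∈ Finset.cons b s hb, (Finset.univ.filter fun a => f a = b').card = g b')).filter
            fun f => (Finset.univ.filter fun a => f a = b) = T).card
          = Nat.multinomial s g := by
        intro T hT
        rw [Finset.mem_powersetCard_univ] at hT
        have hcard : Fintype.card {a // a ∈ (Tᶜ : Finset α)} = Fintype.card α - g b := by
          rw [Fintype.card_coe, Finset.card_compl, hT]
        rw [Finset.card_bij' (t := Finset.univ.filter fun h : {a // a ∈ (Tᶜ : Finset α)} → β =>
              (∀ x, h x ∈ s) ∧ ∀ b' ∈ s, (Finset.univ.filter fun x => h x = b').card = g b')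
            (i := fun f _ => fun x => f x.1)
            (j := fun h _ => fun a => if ha : a ∈ (Tᶜ : Finset α) then h ⟨a, ha⟩ else b)
            ?_ ?_ ?_ ?_]
        · exact ih _ g (by omega)
        · -- hi : down f ∈ B
          intro f hf
          rw [Finset.mem_filter] at hf
          obtain ⟨hf1, hfib⟩ := hf
          rw [Finset.mem_filter] at hf1
          obtain ⟨-, hall, hcnt⟩ := hf1
          have hTa : ∀ a, a ∈ T ↔ f a = b := by
            intro a
            rw [← hfib, Finset.mem_filter]
            simp
          rw [Finset.mem_filter]
          refine ⟨Finset.mem_univ _, fun x => ?_, fun b' hb' => ?_⟩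
          · rcases Finset.mem_cons.mp (hall x.1) with h1 | h1
            · exact absurd ((hTa x.1).mpr h1) (Finset.mem_compl.mp x.2)
            · exact h1
          · show (Finset.univ.filter fun x : {a // a ∈ (Tᶜ : Finset α)} => f x.1 = b').card = g b'
            rw [card_filter_subtype (Tᶜ : Finset α) (fun a => f a = b')]
            rw [show ((Tᶜ : Finset α).filter fun a => f a = b')
                = Finset.univ.filter fun a => f a = b' by
              ext a
              simp only [Finset.mem_filter, Finset.mem_univ, true_and, Finset.mem_compl,
                and_iff_right_iff_imp]
              intro hfa ha
              rw [(hTa a).mp ha] at hfa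
              exact hb (hfa ▸ hb')]
            exact hcnt b' (Finset.mem_cons_of_mem hb')
        · -- hj : up h ∈ A
          intro h hh
          beta_reduce
          rw [Finset.mem_filter] at hh
          obtain ⟨-, hs, hcnt⟩ := hh
          have hupb : ∀ a : α, (if ha : a ∈ (Tᶜ : Finset α) then h ⟨a, ha⟩ else b) = b ↔ a ∈ T := by
            intro a
            by_cases ha : a ∈ (Tᶜ : Finset α)
            · rw [dif_pos ha]
              have h1 : h ⟨a, ha⟩ ∈ s := hs _
              have h2 : a ∉ T := Finset.mem_compl.mp ha
              constructor
              · intro he; exact absurd (he ▸ h1) hb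
              · intro hmem; exact absurd hmem h2
            · rw [dif_neg ha]
              have h2 : a ∈ T := by rwa [Finset.mem_compl, not_not] at ha
              exact iff_of_true rfl h2
          have hfibT : (Finset.univ.filter fun a : α =>
              (if ha : a ∈ (Tᶜ : Finset α) then h ⟨a, ha⟩ else b) = b) = T := by
            ext a
            simp only [Finset.mem_filter, Finset.mem_univ, true_and]
            exact hupb a
          rw [Finset.mem_filter, Finset.mem_filter]
          refine ⟨⟨Finset.mem_univ _, fun a => ?_, fun b' hb' => ?_⟩, hfibT⟩
          · change (if ha : a ∈ (Tᶜ : Finset α) then h ⟨a, ha⟩ else b) ∈ Finset.cons b s hb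
            by_cases ha : a ∈ (Tᶜ : Finset α)
            · rw [dif_pos ha]; exact Finset.mem_cons_of_mem (hs ⟨a, ha⟩)
            · rw [dif_neg ha]; exact Finset.mem_cons_self b s
          · rcases Finset.mem_cons.mp hb' with h1 | h1
            · subst h1
              rw [hfibT, hT]
            · rw [show (Finset.univ.filter fun a : α =>
                  (if ha : a ∈ (Tᶜ : Finset α) then h ⟨a, ha⟩ else b) = b')
                  = (Tᶜ : Finset α).filter fun a =>
                    (if ha : a ∈ (Tᶜ : Finset α) then h ⟨a, ha⟩ else b) = b' by
                ext a
                simp only [Finset.mem_filter, Finset.mem_univ, true_and, iff_and_self]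
                intro he
                by_contra ha
                rw [dif_neg ha] at he
                exact hb (he ▸ h1)]
              rw [← card_filter_subtype (Tᶜ : Finset α)
                (fun a => (if ha : a ∈ (Tᶜ : Finset α) then h ⟨a, ha⟩ else b) = b')]
              rw [show (Finset.univ.filter fun x : {a // a ∈ (Tᶜ : Finset α)} =>
                    (if ha : x.1 ∈ (Tᶜ : Finset α) then h ⟨x.1, ha⟩ else b) = b')
                  = Finset.univ.filter fun x => h x = b' by
                apply Finset.filter_congr
                intro x _
                rw [dif_pos x.2]]
              exact hcnt b' h1
        · -- left inverse
          intro f hf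
          rw [Finset.mem_filter] at hf
          obtain ⟨hf1, hfib⟩ := hf
          funext a
          change (if ha : a ∈ (Tᶜ : Finset α) then f a else b) = f a
          by_cases ha : a ∈ (Tᶜ : Finset α)
          · rw [dif_pos ha]
          · rw [dif_neg ha]
            simp only [Finset.mem_compl, not_not] at ha
            have := hfib ▸ ha
            exact ((Finset.mem_filter.mp this).2).symm ▸ rfl
        · -- right inverse
          intro h hh
          beta_reduce
          funext x
          rw [dif_pos x.2]
      rw [Finset.sum_congr rfl key, Finset.sum_const, Finset.card_powersetCard,
        Finset.card_univ, smul_eq_mul, Nat.multinomial_cons, hg]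


private lemma card_prescribed_fibers {α β : Type} [Fintype α] [DecidableEq α] [Fintype β]
    [DecidableEq β] (g : β → ℕ) (hg : ∑ b, g b = Fintype.card α) :
    (Finset.univ.filter fun f : α → β =>
        ∀ b, (Finset.univ.filter fun a => f a = b).card = g b).card
      = Nat.multinomial Finset.univ g := by
  rw [← card_prescribed_fibers_aux Finset.univ α g hg]
  congr 1
  apply Finset.filter_congr
  intro f _
  simp [Finset.mem_univ]

private def cvec (n t r : ℕ) (hr : 1 ≤ r) (f : Fin n → Fin (t + 1)) (ℓ : Fin t) : Fin r :=
  ⟨min (r - 1) ((Finset.univ.filter fun j => f j = ℓ.succ).card - 1), by omega⟩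

private def tvec (t r : ℕ) (s : Fin t → Fin r) (j : Fin r) : Fin (t + 1) :=
  ⟨(Finset.univ.filter fun ℓ => s ℓ = j).card,
    Nat.lt_succ_of_le (le_trans (Finset.card_filter_le _ _) (by simp))⟩


/-- For `t ≥ 0`, `r ≥ 1` and `n ≥ t`:
`θ_{t,r}(n) = (n)_t · Σ_𝐢 C(t;i₁,…,i_r)·(n−t)_{|𝐢|−t} / ((1!)^{i₁}⋯(r!)^{i_r})`,
summing over `r`-tuples `𝐢` of nonnegative integers with `i₁+⋯+i_r = t` and
`|𝐢| = i₁+2i₂+⋯+r·i_r ≤ n`.  (Each component of such a tuple is at most `t`, so the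
tuples are represented as functions `Fin r → Fin (t+1)`, component `j` encoding
`i_{j+1}`.) -/
theorem theta_eq_descFactorial_sum (n t r : ℕ) (hr : 1 ≤ r) (h : t ≤ n) :
    (theta t r n : ℚ) =
      (Nat.descFactorial n t : ℚ) *
        ∑ i ∈ (Finset.univ : Finset (Fin r → Fin (t + 1))).filter
            (fun i => (∑ j, (i j).val) = t ∧ (∑ j, (j.val + 1) * (i j).val) ≤ n),
          (Nat.multinomial Finset.univ (fun j => (i j).val) : ℚ) *
            (Nat.descFactorial (n - t) ((∑ j, (j.val + 1) * (i j).val) - t) : ℚ) /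
            ∏ j : Fin r, ((j.val + 1).factorial : ℚ) ^ (i j).val := by
  have hsumfib : ∀ f : Fin n → Fin (t + 1),
      ∑ ℓ, (Finset.univ.filter fun j => f j = ℓ).card = n := by
    intro f
    have := (Finset.card_eq_sum_card_fiberwise
      (s := (Finset.univ : Finset (Fin n))) (t := Finset.univ) (f := f)
      (fun x _ => Finset.mem_univ (f x))).symm
    simpa using this
  set F : Finset (Fin n → Fin (t + 1)) := Finset.univ.filter (fun f =>
    ∀ ℓ : Fin (t + 1), ℓ.val ≠ 0 →
      1 ≤ (Finset.univ.filter fun j : Fin n => f j = ℓ).card ∧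
      (Finset.univ.filter fun j : Fin n => f j = ℓ).card ≤ r) with hF
  have hKfib : ∀ f ∈ F, ∀ s : Fin t → Fin r, cvec n t r hr f = s →
      ∀ ℓ : Fin t, (Finset.univ.filter fun j => f j = ℓ.succ).card = (s ℓ).val + 1 := by
    intro f hf s hcs ℓ
    rw [hF, Finset.mem_filter] at hf
    obtain ⟨h1, h2⟩ := hf.2 (ℓ.succ) (by simp [Fin.val_succ])
    have h3 : (cvec n t r hr f ℓ).val = (s ℓ).val := by rw [hcs]
    have h4 : (s ℓ).val < r := (s ℓ).isLt
    simp only [cvec] at h3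
    omega
  have step2 : ∀ s : Fin t → Fin r, (F.filter fun f => cvec n t r hr f = s).card
      = if (∑ ℓ, ((s ℓ).val + 1)) ≤ n then
          Nat.multinomial Finset.univ
            (Fin.cons (n - ∑ ℓ, ((s ℓ).val + 1)) (fun ℓ => (s ℓ).val + 1)) else 0 := by
    intro s
    by_cases hK : (∑ ℓ, ((s ℓ).val + 1)) ≤ n
    · rw [if_pos hK]
      have hgsum : ∑ b, (Fin.cons (n - ∑ ℓ, ((s ℓ).val + 1))
          (fun ℓ => (s ℓ).val + 1) : Fin (t+1) → ℕ) b = Fintype.card (Fin n) := by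
        rw [Fin.sum_cons]
        simp only [Fintype.card_fin]
        omega
      rw [← card_prescribed_fibers _ hgsum]
      congr 1
      ext f
      simp only [Finset.mem_filter, Finset.mem_univ, true_and]
      constructor
      · rintro ⟨hfF, hcs⟩
        have hfib : ∀ ℓ : Fin t, (Finset.univ.filter fun j => f j = ℓ.succ).card
            = (s ℓ).val + 1 := hKfib f hfF s hcs
        intro ℓ
        induction ℓ using Fin.cases with
        | zero =>
            rw [Fin.cons_zero]
            have h5 := hsumfib f
            rw [Fin.sum_univ_succ] at h5
            rw [Finset.sum_congr rfl (fun ℓ _ => hfib ℓ)] at h5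
            omega
        | succ ℓ' => rw [Fin.cons_succ]; exact hfib ℓ'
      · intro hfib
        constructor
        · rw [hF, Finset.mem_filter]
          refine ⟨Finset.mem_univ _, ?_⟩
          intro ℓ hℓ
          induction ℓ using Fin.cases with
          | zero => simp at hℓ
          | succ ℓ' =>
              rw [hfib ℓ'.succ, Fin.cons_succ]
              have := (s ℓ').isLt
              omega
        · funext ℓ
          apply Fin.ext
          have h6 := hfib ℓ.succ
          rw [Fin.cons_succ] at h6
          simp only [cvec, h6]
          have := (s ℓ).isLt
          omega
    · rw [if_neg hK, Finset.card_eq_zero, Finset.filter_eq_empty_iff]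
      intro f hfF hcs
      have hfib := hKfib f hfF _ hcs
      have h5 := hsumfib f
      rw [Fin.sum_univ_succ] at h5
      rw [Finset.sum_congr rfl (fun ℓ _ => hfib ℓ)] at h5
      omega
  have hTheta : theta t r n
      = ∑ s ∈ Finset.univ.filter (fun s : Fin t → Fin r => (∑ ℓ, ((s ℓ).val + 1)) ≤ n),
          Nat.multinomial Finset.univ
            (Fin.cons (n - ∑ ℓ, ((s ℓ).val + 1)) (fun ℓ => (s ℓ).val + 1)) := by
    have h0 : theta t r n = F.card := rfl
    rw [h0, Finset.card_eq_sum_card_fiberwise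
      (f := cvec n t r hr) (t := Finset.univ) (fun f _ => Finset.mem_univ _)]
    rw [Finset.sum_congr rfl (fun s _ => step2 s), Finset.sum_filter]
  have hsumtv : ∀ s : Fin t → Fin r, ∑ j, (tvec t r s j).val = t := by
    intro s
    have := (Finset.card_eq_sum_card_fiberwise
      (s := (Finset.univ : Finset (Fin t))) (t := Finset.univ) (f := s)
      (fun x _ => Finset.mem_univ (s x))).symm
    simpa [tvec] using this
  have hKτ : ∀ s : Fin t → Fin r,
      ∑ j, (j.val + 1) * (tvec t r s j).val = ∑ ℓ, ((s ℓ).val + 1) := by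
    intro s
    rw [← Finset.sum_fiberwise_of_maps_to (g := s) (t := Finset.univ)
      (fun ℓ _ => Finset.mem_univ _) (fun ℓ => (s ℓ).val + 1)]
    apply Finset.sum_congr rfl
    intro j _
    rw [Finset.sum_congr rfl (fun ℓ hℓ => by rw [(Finset.mem_filter.mp hℓ).2]),
      Finset.sum_const, smul_eq_mul, mul_comm]
    rfl
  have hmaps : ∀ s ∈ Finset.univ.filter
        (fun s : Fin t → Fin r => (∑ ℓ, ((s ℓ).val + 1)) ≤ n),
      tvec t r s ∈ (Finset.univ : Finset (Fin r → Fin (t + 1))).filter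
        (fun i => (∑ j, (i j).val) = t ∧ (∑ j, (j.val + 1) * (i j).val) ≤ n) := by
    intro s hs
    rw [Finset.mem_filter] at hs ⊢
    exact ⟨Finset.mem_univ _, hsumtv s, by rw [hKτ]; exact hs.2⟩
  rw [hTheta]
  push_cast
  rw [← Finset.sum_fiberwise_of_maps_to hmaps
    (fun s => (Nat.multinomial Finset.univ
      (Fin.cons (n - ∑ ℓ, ((s ℓ).val + 1)) (fun ℓ => (s ℓ).val + 1)) : ℚ))]
  rw [Finset.mul_sum]
  apply Finset.sum_congr rfl
  intro i hI
  obtain ⟨-, hit, hin⟩ := Finset.mem_filter.mp hI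
  have hKi : ∀ s : Fin t → Fin r, tvec t r s = i →
      ∑ ℓ, ((s ℓ).val + 1) = ∑ j, (j.val + 1) * (i j).val := by
    intro s hsi
    rw [← hKτ s, hsi]
  have hEcard : ((Finset.univ.filter
        (fun s : Fin t → Fin r => (∑ ℓ, ((s ℓ).val + 1)) ≤ n)).filter
        (fun s => tvec t r s = i)).card
      = Nat.multinomial Finset.univ (fun j => (i j).val) := by
    rw [← card_prescribed_fibers (α := Fin t) (β := Fin r) (fun j => (i j).val)
      (by simpa using hit)]
    congr 1
    ext s
    simp only [Finset.mem_filter, Finset.mem_univ, true_and]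
    constructor
    · rintro ⟨hKs, hsi⟩
      intro j
      rw [← hsi]
      rfl
    · intro hfib
      have hsi : tvec t r s = i := funext fun j => Fin.ext (by simpa [tvec] using hfib j)
      exact ⟨by rw [hKi s hsi]; exact hin, hsi⟩
  have hMval : ∀ s ∈ (Finset.univ.filter
        (fun s : Fin t → Fin r => (∑ ℓ, ((s ℓ).val + 1)) ≤ n)).filter
        (fun s => tvec t r s = i),
      (Nat.multinomial Finset.univ
          (Fin.cons (n - ∑ ℓ, ((s ℓ).val + 1)) (fun ℓ => (s ℓ).val + 1)) : ℚ)
        = ((n.descFactorial t : ℚ) *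
            ((n - t).descFactorial ((∑ j, (j.val + 1) * (i j).val) - t) : ℚ)) /
            ∏ j : Fin r, ((j.val + 1).factorial : ℚ) ^ (i j).val := by
    intro s hs
    obtain ⟨hs1, hsi⟩ := Finset.mem_filter.mp hs
    have hKs : (∑ ℓ, ((s ℓ).val + 1)) ≤ n := (Finset.mem_filter.mp hs1).2
    set K := ∑ ℓ, ((s ℓ).val + 1) with hKdef
    have hK2 : K = ∑ j, (j.val + 1) * (i j).val := hKi s hsi
    clear_value K
    have htK : t ≤ K := by
      rw [hKdef]
      have h9 : (∑ ℓ : Fin t, 1) ≤ ∑ ℓ, ((s ℓ).val + 1) :=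
        Finset.sum_le_sum (fun ℓ _ => Nat.succ_le_succ (Nat.zero_le _))
      simpa using h9
    have hprod : (∏ ℓ : Fin t, ((s ℓ).val + 1).factorial)
        = ∏ j : Fin r, ((j.val + 1).factorial) ^ (i j).val := by
      rw [← Finset.prod_fiberwise_of_maps_to (g := s) (t := Finset.univ)
        (fun ℓ _ => Finset.mem_univ _) (fun ℓ => ((s ℓ).val + 1).factorial)]
      apply Finset.prod_congr rfl
      intro j _
      rw [Finset.prod_congr rfl (fun ℓ hℓ => by rw [(Finset.mem_filter.mp hℓ).2]),
        Finset.prod_const]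
      congr 1
      rw [← hsi]
      rfl
    have hspec := Nat.multinomial_spec Finset.univ
      (Fin.cons (n - K) (fun ℓ => (s ℓ).val + 1) : Fin (t + 1) → ℕ)
    rw [Fin.prod_univ_succ, Fin.sum_univ_succ] at hspec
    simp only [Fin.cons_zero, Fin.cons_succ] at hspec
    rw [hprod] at hspec
    rw [← hKdef] at hspec
    rw [show n - K + K = n from by clear * - hKs; omega] at hspec
    have h2 : (n - t).factorial * n.descFactorial t = n.factorial :=
      Nat.factorial_mul_descFactorial h
    have h3 : (n - K).factorial * (n - t).descFactorial (K - t) = (n - t).factorial := by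
      have h4 := Nat.factorial_mul_descFactorial (n := n - t) (k := K - t) (by clear * - htK hKs h; omega)
      rwa [show n - t - (K - t) = n - K by clear * - htK hKs h; omega] at h4
    have hP0 : (∏ j : Fin r, ((j.val + 1).factorial : ℚ) ^ (i j).val) ≠ 0 := by
      apply ne_of_gt
      apply Finset.prod_pos
      intro j _
      exact pow_pos (by exact_mod_cast Nat.factorial_pos _) _
    rw [← hK2, eq_div_iff hP0]
    have hcancel : ((n - K).factorial : ℚ) ≠ 0 := by
      exact_mod_cast (Nat.factorial_pos _).ne'
    apply mul_left_cancel₀ hcancel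
    have hq := congrArg (Nat.cast : ℕ → ℚ) hspec
    have hnat2 : n.factorial
        = (n - K).factorial * ((n - t).descFactorial (K - t) * n.descFactorial t) := by
      rw [← h2, ← h3]
      ring
    have hq2 := congrArg (Nat.cast : ℕ → ℚ) hnat2
    push_cast at hq hq2
    linear_combination hq + hq2
  rw [Finset.sum_congr rfl hMval, Finset.sum_const, hEcard, nsmul_eq_mul]
  ring
end

section
/- For all integers t ≥ 0, r ≥ 1 and n ≥ t + r, θ_{t,r}(n) ≤ ( (n − (t−1)/2) · (n−t)^{r−1} / (r−1)! )^t, where the right-hand side is interpreted as a real number. -/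
section Aux
open Finset

/-- collapse the last label to 0 -/
def dmap (t : ℕ) (x : Fin (t+2)) : Fin (t+1) :=
  if h : x.val ≤ t then ⟨x.val, by omega⟩ else 0

lemma dmap_eq_iff {t : ℕ} (x : Fin (t+2)) (ℓ : Fin (t+1)) (hℓ : ℓ.val ≠ 0) :
    dmap t x = ℓ ↔ x.val = ℓ.val := by
  unfold dmap
  split
  · simp [Fin.ext_iff]
  · have hx : x.val = t + 1 := by omega
    have hl : ℓ.val ≤ t := by omega
    constructor
    · intro h0
      exact absurd (congrArg Fin.val h0).symm (by simpa using hℓ)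
    · intro h; omega

lemma dmap_ne_zero {t : ℕ} (x : Fin (t+2)) (h : dmap t x ≠ 0) :
    x ≠ 0 ∧ x ≠ Fin.last (t+1) := by
  unfold dmap at h
  constructor
  · rintro rfl; simp at h
  · rintro rfl
    apply h
    have : ¬ ((t:ℕ)+1 ≤ t) := by omega
    simp [Fin.last, this]

def cnt (n r t : ℕ) (s : Finset (Fin n)) : ℕ :=
  (univ.filter fun f : Fin n → Fin (t+1) =>
    (∀ j, f j ≠ 0 → j ∈ s) ∧
    ∀ ℓ : Fin (t+1), ℓ.val ≠ 0 →
      1 ≤ (univ.filter fun j => f j = ℓ).card ∧ (univ.filter fun j => f j = ℓ).card ≤ r).card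

lemma theta_le_cnt (t r n : ℕ) : theta t r n ≤ cnt n r t univ := by
  apply Finset.card_le_card
  intro f hf
  simp only [theta, cnt, mem_filter, mem_univ, true_and] at hf ⊢
  exact ⟨fun j _ => trivial, hf⟩

lemma cnt_rec (n r t : ℕ) (s : Finset (Fin n)) :
    cnt n r (t+1) s ≤ ∑ k ∈ Icc 1 r, ∑ S ∈ powersetCard k s, cnt n r t (s \ S) := by
  classical
  set P : (Fin n → Fin (t+2)) → Prop := fun f =>
    (∀ j, f j ≠ 0 → j ∈ s) ∧
    ∀ ℓ : Fin (t+2), ℓ.val ≠ 0 →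
      1 ≤ (univ.filter fun j => f j = ℓ).card ∧ (univ.filter fun j => f j = ℓ).card ≤ r with hP
  set A : Finset (Fin n → Fin (t+2)) := univ.filter (fun f => P f) with hAdef
  set φ : (Fin n → Fin (t+2)) → Finset (Fin n) :=
    fun f => univ.filter fun j => f j = Fin.last (t+1) with hφ
  have hlast : (Fin.last (t+1)).val ≠ 0 := by simp
  have hmemA : ∀ f, f ∈ A ↔ P f := by intro f; simp [hAdef]
  have hφs : ∀ f, P f → φ f ⊆ s := by
    intro f hf j hj
    simp only [hφ, mem_filter, mem_univ, true_and] at hj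
    refine hf.1 j ?_
    rw [hj]
    intro h
    exact hlast (by simpa using congrArg Fin.val h)
  have hφcard : ∀ f, P f → (φ f).card ∈ Icc 1 r := by
    intro f hf
    have h2 := hf.2 (Fin.last (t+1)) hlast
    simpa [mem_Icc, hφ] using h2
  have hcnt : cnt n r (t+1) s = A.card := rfl
  rw [hcnt,
    card_eq_sum_card_fiberwise (fun f hf => hφcard f ((hmemA f).1 hf))]
  apply Finset.sum_le_sum
  intro k hk
  have hfib2 : ∀ f ∈ A.filter (fun f => (φ f).card = k), φ f ∈ powersetCard k s := by
    intro f hf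
    rw [mem_filter] at hf
    rw [mem_powersetCard]
    exact ⟨hφs f ((hmemA f).1 hf.1), hf.2⟩
  rw [card_eq_sum_card_fiberwise hfib2]
  apply Finset.sum_le_sum
  intro S hS
  rw [mem_powersetCard] at hS
  apply Finset.card_le_card_of_injOn (fun f => dmap t ∘ f)
  · -- maps into the cnt set
    intro f hf
    simp only [Finset.mem_coe, mem_filter, mem_univ, true_and] at hf
    obtain ⟨⟨hfA, hφk⟩, hφS⟩ := hf
    rw [hmemA] at hfA
    have hfS : ∀ j, f j = Fin.last (t+1) ↔ j ∈ S := by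
      intro j
      rw [← hφS]
      simp [hφ]
    simp only [Finset.mem_coe, cnt, mem_filter, mem_univ, true_and]
    constructor
    · -- support
      intro j hj
      have hd := dmap_ne_zero (f j) hj
      rw [mem_sdiff]
      refine ⟨hfA.1 j hd.1, ?_⟩
      intro hjS
      exact hd.2 ((hfS j).2 hjS)
    · -- fibers
      intro ℓ hℓ
      have hup : ℓ.val < t + 2 := by omega
      have hfilter :
          (univ.filter fun j => (dmap t ∘ f) j = ℓ)
            = (univ.filter fun j => f j = (⟨ℓ.val, hup⟩ : Fin (t+2))) := by
        apply Finset.filter_congr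
        intro j _
        simp only [Function.comp]
        rw [dmap_eq_iff _ _ hℓ]
        constructor
        · intro h; exact Fin.ext h
        · intro h; exact congrArg Fin.val h
      rw [hfilter]
      exact hfA.2 ⟨ℓ.val, hup⟩ hℓ
  · -- injectivity
    intro f1 hf1 f2 hf2 heq
    simp only [Finset.coe_filter, Set.mem_setOf_eq, mem_filter, mem_univ, true_and] at hf1 hf2
    obtain ⟨⟨hA1, _⟩, hS1⟩ := hf1
    obtain ⟨⟨hA2, _⟩, hS2⟩ := hf2
    funext j
    by_cases hj : j ∈ S
    · have h1 : f1 j = Fin.last (t+1) := by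
        have := hS1 ▸ hj
        simpa [hφ] using this
      have h2 : f2 j = Fin.last (t+1) := by
        have := hS2 ▸ hj
        simpa [hφ] using this
      rw [h1, h2]
    · have h1 : f1 j ≠ Fin.last (t+1) := by
        intro h
        exact hj (by rw [← hS1]; simp [hφ, h])
      have h2 : f2 j ≠ Fin.last (t+1) := by
        intro h
        exact hj (by rw [← hS2]; simp [hφ, h])
      have hv1 : (f1 j).val ≤ t := by
        have := (f1 j).isLt
        have : (f1 j).val ≠ t + 1 := fun hc => h1 (Fin.ext (by simp [Fin.last, hc]))
        omega
      have hv2 : (f2 j).val ≤ t := by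
        have := (f2 j).isLt
        have : (f2 j).val ≠ t + 1 := fun hc => h2 (Fin.ext (by simp [Fin.last, hc]))
        omega
      have := congrFun heq j
      simp only [Function.comp, dmap, hv1, hv2, dif_pos] at this
      exact Fin.ext (by simpa using congrArg Fin.val this)


noncomputable def bfun (r q : ℕ) : ℝ :=
  max ((q:ℝ)^(r-1) / ((r-1).factorial : ℝ))
    (∑ j ∈ Finset.range r, ((q.choose j : ℝ))/(j+1))

lemma bfun_nonneg (r q : ℕ) : 0 ≤ bfun r q :=
  le_trans (Finset.sum_nonneg fun j _ => by positivity) (le_max_right _ _)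

lemma bfun_mono (r : ℕ) {q q' : ℕ} (h : q ≤ q') : bfun r q ≤ bfun r q' := by
  apply max_le_max
  · apply div_le_div_of_nonneg_right ?_ (by positivity)
    · exact pow_le_pow_left₀ (by positivity) (by exact_mod_cast h) _
  · apply Finset.sum_le_sum
    intro j _
    apply div_le_div_of_nonneg_right ?_ (by positivity)
    exact_mod_cast Nat.choose_mono j h

lemma sum_choose_eq (r q : ℕ) :
    ∑ k ∈ Finset.Icc 1 r, (((q+1).choose k : ℝ)) =
      (q+1) * ∑ j ∈ Finset.range r, ((q.choose j : ℝ))/(j+1) := by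
  rw [← Finset.Ico_add_one_right_eq_Icc, Finset.sum_Ico_eq_sum_range, Finset.mul_sum,
    show r + 1 - 1 = r from rfl]
  apply Finset.sum_congr rfl
  intro j _
  have h := Nat.add_one_mul_choose_eq q j
  have h' : ((q+1) * q.choose j : ℝ) = ((q+1).choose (j+1) : ℝ) * (j+1) := by
    exact_mod_cast congrArg (Nat.cast (R := ℝ)) h
  have hj : ((j:ℝ)+1) ≠ 0 := by positivity
  rw [show 1 + j = j + 1 by ring]
  field_simp
  linarith [h']

lemma bfun_key (r q : ℕ) :
    ∑ k ∈ Finset.Icc 1 r, (((q+1).choose k : ℝ)) ≤ ((q:ℝ)+1) * bfun r q := by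
  rw [sum_choose_eq]
  have := le_max_right ((q:ℝ)^(r-1) / ((r-1).factorial : ℝ))
    (∑ j ∈ Finset.range r, ((q.choose j : ℝ))/(j+1))
  have hq : (0:ℝ) ≤ (q:ℝ)+1 := by positivity
  exact mul_le_mul_of_nonneg_left this hq

lemma natN' (r : ℕ) : ∀ q, r + 1 ≤ q →
    r.factorial * (∑ k ∈ Finset.Icc 1 (r+1), (q+1).choose k) ≤ (q+1) * q^r := by
  induction r with
  | zero =>
    intro q hq
    simp [Finset.Icc_self]
  | succ r ih =>
    intro q hq
    have ihq := ih q (by omega)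
    have hsum : ∑ k ∈ Finset.Icc 1 (r+1+1), (q+1).choose k
        = (∑ k ∈ Finset.Icc 1 (r+1), (q+1).choose k) + (q+1).choose (r+2) :=
      Finset.sum_Icc_succ_top (by omega) _
    have hdesc : (r+2).factorial * (q+1).choose (r+2) = (q+1) * q.descFactorial (r+1) := by
      rw [← Nat.descFactorial_eq_factorial_mul_choose, Nat.succ_descFactorial_succ]
    have hd2 : q.descFactorial (r+1) ≤ (q - r) * q^r := by
      rw [Nat.descFactorial_succ]
      exact Nat.mul_le_mul_left _ (q.descFactorial_le_pow r)
    have hlin : (r+2)*(r+1) + (q - r) ≤ (r+2)*q := by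
      have h1 : 2 ≤ q - r := by omega
      have h2 : q - r + r = q := by omega
      nlinarith [h1, h2]
    have key : (r+2) * ((r+1).factorial * ∑ k ∈ Finset.Icc 1 (r+2), (q+1).choose k)
        ≤ (r+2) * ((q+1) * q^(r+1)) := by
      calc (r+2) * ((r+1).factorial * ∑ k ∈ Finset.Icc 1 (r+2), (q+1).choose k)
          = (r+2)*(r+1)*(r.factorial * (∑ k ∈ Finset.Icc 1 (r+1), (q+1).choose k))
            + (r+2).factorial * (q+1).choose (r+2) := by
            rw [hsum, Nat.factorial_succ (r+1), Nat.factorial_succ r]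
            ring
        _ = (r+2)*(r+1)*(r.factorial * (∑ k ∈ Finset.Icc 1 (r+1), (q+1).choose k))
            + (q+1) * q.descFactorial (r+1) := by rw [hdesc]
        _ ≤ (r+2)*(r+1)*((q+1) * q^r) + (q+1) * ((q-r) * q^r) := by
            exact Nat.add_le_add (Nat.mul_le_mul_left _ ihq) (Nat.mul_le_mul_left _ hd2)
        _ = ((q+1) * q^r) * ((r+2)*(r+1) + (q - r)) := by ring
        _ ≤ ((q+1) * q^r) * ((r+2)*q) := Nat.mul_le_mul_left _ hlin
        _ = (r+2) * ((q+1) * q^(r+1)) := by ring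
    exact Nat.le_of_mul_le_mul_left key (by omega)

lemma natN (r q : ℕ) (hr : 1 ≤ r) (hq : r ≤ q) :
    (r-1).factorial * (∑ k ∈ Finset.Icc 1 r, (q+1).choose k) ≤ (q+1) * q^(r-1) := by
  obtain ⟨r', rfl⟩ : ∃ r', r = r'+1 := ⟨r-1, by omega⟩
  simpa using natN' r' q (by omega)

lemma bfun_eq (r q : ℕ) (hr : 1 ≤ r) (hq : r ≤ q) :
    bfun r q = (q:ℝ)^(r-1) / ((r-1).factorial : ℝ) := by
  apply max_eq_left
  have hfac : (0:ℝ) < ((r-1).factorial : ℝ) := by exact_mod_cast (r-1).factorial_pos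
  have hq1 : (0:ℝ) < (q:ℝ)+1 := by positivity
  have hN : ((r-1).factorial : ℝ) * ((q+1) * ∑ j ∈ Finset.range r, ((q.choose j : ℝ))/(j+1))
      ≤ ((q:ℝ)+1) * (q:ℝ)^(r-1) := by
    rw [← sum_choose_eq]
    have h := natN r q hr hq
    calc ((r-1).factorial : ℝ) * ∑ k ∈ Finset.Icc 1 r, (((q+1).choose k : ℝ))
        = (((r-1).factorial * ∑ k ∈ Finset.Icc 1 r, (q+1).choose k : ℕ) : ℝ) := by
          push_cast; ring
      _ ≤ (((q+1) * q^(r-1) : ℕ) : ℝ) := by exact_mod_cast h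
      _ = ((q:ℝ)+1) * (q:ℝ)^(r-1) := by push_cast; ring
  rw [le_div_iff₀ hfac]
  have h2 : ((q:ℝ)+1) * ((∑ j ∈ Finset.range r, ((q.choose j : ℝ))/(j+1)) * ((r-1).factorial : ℝ))
      ≤ ((q:ℝ)+1) * (q:ℝ)^(r-1) := by nlinarith [hN]
  exact le_of_mul_le_mul_left h2 hq1

lemma ident (t q k : ℕ) :
    ((q:ℝ)+1) * ((t+1+q).choose k : ℝ) * (((t+1+q-k).descFactorial t : ℝ))
      = (((t+1+q).descFactorial (t+1) : ℝ)) * (((q+1).choose k : ℝ)) := by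
  set m := t + 1 + q with hm
  rcases le_or_gt k (q+1) with hk | hk
  · have hkm : k ≤ m := by omega
    have e1 : ((m-k) - t).factorial * (m-k).descFactorial t = (m-k).factorial :=
      Nat.factorial_mul_descFactorial (by omega)
    have e2 : (m - (t+1)).factorial * m.descFactorial (t+1) = m.factorial :=
      Nat.factorial_mul_descFactorial (by omega)
    have hq1 : m - (t+1) = q := by omega
    have hq2 : (m-k) - t = q+1-k := by omega
    rw [hq1] at e2
    rw [hq2] at e1
    have hc1 : ((m.choose k : ℝ)) = (m.factorial : ℝ) / ((k.factorial : ℝ) * ((m-k).factorial : ℝ)) :=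
      Nat.cast_choose ℝ hkm
    have hc2 : (((q+1).choose k : ℝ)) = ((q+1).factorial : ℝ) / ((k.factorial : ℝ) * ((q+1-k).factorial : ℝ)) :=
      Nat.cast_choose ℝ hk
    have hd1 : ((m-k).descFactorial t : ℝ) = ((m-k).factorial : ℝ) / ((q+1-k).factorial : ℝ) := by
      rw [eq_div_iff (by exact_mod_cast (q+1-k).factorial_ne_zero)]
      exact_mod_cast congrArg (Nat.cast (R := ℝ)) (by rw [mul_comm] at e1; exact e1)
    have hd2 : (m.descFactorial (t+1) : ℝ) = (m.factorial : ℝ) / ((q).factorial : ℝ) := by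
      rw [eq_div_iff (by exact_mod_cast (q).factorial_ne_zero)]
      exact_mod_cast congrArg (Nat.cast (R := ℝ)) (by rw [mul_comm] at e2; exact e2)
    have hfq : ((q+1).factorial : ℝ) = ((q:ℝ)+1) * (q.factorial : ℝ) := by
      rw [Nat.factorial_succ]; push_cast; ring
    rw [hc1, hc2, hd1, hd2, hfq]
    have n1 : (k.factorial : ℝ) ≠ 0 := by exact_mod_cast k.factorial_ne_zero
    have n2 : ((m-k).factorial : ℝ) ≠ 0 := by exact_mod_cast (m-k).factorial_ne_zero
    have n3 : ((q+1-k).factorial : ℝ) ≠ 0 := by exact_mod_cast (q+1-k).factorial_ne_zero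
    have n4 : ((q).factorial : ℝ) ≠ 0 := by exact_mod_cast (q).factorial_ne_zero
    field_simp
  · rcases le_or_gt k m with hkm | hkm
    · have h1 : (m-k).descFactorial t = 0 :=
        Nat.descFactorial_eq_zero_iff_lt.mpr (by omega)
      have h2 : (q+1).choose k = 0 := Nat.choose_eq_zero_of_lt (by omega)
      rw [h1, h2]
      simp
    · have h1 : m.choose k = 0 := Nat.choose_eq_zero_of_lt (by omega)
      have h2 : (q+1).choose k = 0 := Nat.choose_eq_zero_of_lt (by omega)
      rw [h1, h2]
      simp

lemma keysum (r t m : ℕ) :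
    ∑ k ∈ Finset.Icc 1 r, ((m.choose k : ℝ) * ((m-k).descFactorial t : ℝ))
      ≤ (m.descFactorial (t+1) : ℝ) * bfun r (m - (t+1)) := by
  rcases le_or_gt (t+1) m with hm | hm
  · obtain ⟨q, rfl⟩ : ∃ q, m = t+1+q := ⟨m - (t+1), by omega⟩
    have hq : (t+1+q) - (t+1) = q := by omega
    rw [hq]
    have hpos : (0:ℝ) < (q:ℝ)+1 := by positivity
    rw [← mul_le_mul_iff_right₀ hpos]
    have hdnn : (0:ℝ) ≤ ((t+1+q).descFactorial (t+1) : ℝ) := by positivity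
    calc ((q:ℝ)+1) * ∑ k ∈ Finset.Icc 1 r, ((t+1+q).choose k : ℝ) * (((t+1+q)-k).descFactorial t : ℝ)
        = ∑ k ∈ Finset.Icc 1 r, ((q:ℝ)+1) * ((t+1+q).choose k : ℝ) * (((t+1+q)-k).descFactorial t : ℝ) := by
          rw [Finset.mul_sum]; apply Finset.sum_congr rfl; intro k _; ring
      _ = ∑ k ∈ Finset.Icc 1 r, ((t+1+q).descFactorial (t+1) : ℝ) * (((q+1).choose k : ℝ)) := by
          apply Finset.sum_congr rfl; intro k _; exact ident t q k
      _ = ((t+1+q).descFactorial (t+1) : ℝ) * ∑ k ∈ Finset.Icc 1 r, (((q+1).choose k : ℝ)) := by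
          rw [Finset.mul_sum]
      _ ≤ ((t+1+q).descFactorial (t+1) : ℝ) * (((q:ℝ)+1) * bfun r q) :=
          mul_le_mul_of_nonneg_left (bfun_key r q) hdnn
      _ = ((q:ℝ)+1) * (((t+1+q).descFactorial (t+1) : ℝ) * bfun r q) := by ring
  · have h0 : ∀ k ∈ Finset.Icc 1 r, (m.choose k : ℝ) * ((m-k).descFactorial t : ℝ) = 0 := by
      intro k hk
      rw [Finset.mem_Icc] at hk
      rcases le_or_gt k m with hkm | hkm
      · have : (m-k).descFactorial t = 0 :=
          Nat.descFactorial_eq_zero_iff_lt.mpr (by omega)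
        rw [this]; simp
      · rw [Nat.choose_eq_zero_of_lt hkm]; simp
    rw [Finset.sum_eq_zero h0]
    have := bfun_nonneg r (m - (t+1))
    positivity

lemma main_bound (n r : ℕ) : ∀ (t : ℕ) (s : Finset (Fin n)),
    (cnt n r t s : ℝ) ≤ (s.card.descFactorial t : ℝ) * (bfun r (s.card - t))^t := by
  intro t
  induction t with
  | zero =>
    intro s
    have h1 : cnt n r 0 s ≤ 1 := by
      have h2 : cnt n r 0 s ≤ (univ : Finset (Fin n → Fin 1)).card :=
        Finset.card_filter_le _ _
      simpa using h2
    simp only [Nat.descFactorial_zero, pow_zero, Nat.cast_one, mul_one]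
    exact_mod_cast h1
  | succ t ih =>
    intro s
    have hrec := cnt_rec n r t s
    set m := s.card with hm
    have hbnn : (0:ℝ) ≤ bfun r (m - (t+1)) := bfun_nonneg _ _
    calc (cnt n r (t+1) s : ℝ)
        ≤ ∑ k ∈ Finset.Icc 1 r, ∑ S ∈ powersetCard k s, (cnt n r t (s \ S) : ℝ) := by
          exact_mod_cast hrec
      _ ≤ ∑ k ∈ Finset.Icc 1 r, ∑ S ∈ powersetCard k s,
            ((m - k).descFactorial t : ℝ) * (bfun r (m - (t+1)))^t := by
          apply Finset.sum_le_sum; intro k hk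
          rw [Finset.mem_Icc] at hk
          apply Finset.sum_le_sum; intro S hS
          rw [mem_powersetCard] at hS
          have hcard : (s \ S).card = m - k := by rw [card_sdiff_of_subset hS.1, hS.2]
          have h1 := ih (s \ S)
          rw [hcard] at h1
          refine h1.trans ?_
          apply mul_le_mul_of_nonneg_left ?_ (by positivity)
          exact pow_le_pow_left₀ (bfun_nonneg _ _) (bfun_mono _ (by omega)) _
      _ = (∑ k ∈ Finset.Icc 1 r, (m.choose k : ℝ) * ((m - k).descFactorial t : ℝ))
            * (bfun r (m - (t+1)))^t := by
          rw [Finset.sum_mul]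
          apply Finset.sum_congr rfl; intro k _
          rw [Finset.sum_const, Finset.card_powersetCard, nsmul_eq_mul]
          ring
      _ ≤ ((m.descFactorial (t+1) : ℝ) * bfun r (m - (t+1))) * (bfun r (m - (t+1)))^t := by
          exact mul_le_mul_of_nonneg_right (keysum r t m) (by positivity)
      _ = (m.descFactorial (t+1) : ℝ) * (bfun r (m - (t+1)))^(t+1) := by ring

lemma desc_le_amgm (n t : ℕ) (h : t ≤ n) :
    (n.descFactorial t : ℝ) ≤ ((n:ℝ) - ((t:ℝ)-1)/2)^t := by
  rcases Nat.eq_zero_or_pos t with rfl | ht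
  · simp
  have htR : (0:ℝ) < t := by exact_mod_cast ht
  set z : ℕ → ℝ := fun i => (n:ℝ) - i with hz
  have hznn : ∀ i ∈ Finset.range t, 0 ≤ z i := by
    intro i hi
    rw [Finset.mem_range] at hi
    have : (i:ℝ) ≤ (n:ℝ) := by exact_mod_cast by omega
    simp [hz]; linarith
  have hprod : (n.descFactorial t : ℝ) = ∏ i ∈ Finset.range t, z i := by
    rw [Nat.descFactorial_eq_prod_range, Nat.cast_prod]
    apply Finset.prod_congr rfl
    intro i hi
    rw [Finset.mem_range] at hi
    rw [Nat.cast_sub (by omega)]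
  have hw : ∑ _i ∈ Finset.range t, (1/(t:ℝ)) = 1 := by
    rw [Finset.sum_const, Finset.card_range, nsmul_eq_mul]
    field_simp
  have amgm := Real.geom_mean_le_arith_mean_weighted (Finset.range t)
    (fun _ => 1/(t:ℝ)) z (fun i _ => by positivity) hw hznn
  have hsum : ∑ i ∈ Finset.range t, (1/(t:ℝ)) * z i = (n:ℝ) - ((t:ℝ)-1)/2 := by
    rw [← Finset.mul_sum]
    have hzsum : ∑ i ∈ Finset.range t, z i = (t:ℝ)*(n:ℝ) - (t:ℝ)*((t:ℝ)-1)/2 := by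
      have hgauss : ((∑ i ∈ Finset.range t, i) * 2 : ℕ) = t * (t-1) := Finset.sum_range_id_mul_two t
      have hgaussR : (∑ i ∈ Finset.range t, (i:ℝ)) * 2 = (t:ℝ) * ((t:ℝ)-1) := by
        have := congrArg (Nat.cast (R := ℝ)) hgauss
        push_cast [Nat.cast_sub (show 1 ≤ t by omega)] at this
        linarith
      simp only [hz, Finset.sum_sub_distrib, Finset.sum_const, Finset.card_range, nsmul_eq_mul]
      linarith
    rw [hzsum]
    field_simp
  rw [hsum] at amgm
  have hlhs : (∏ i ∈ Finset.range t, z i ^ (1/(t:ℝ)))^t = ∏ i ∈ Finset.range t, z i := by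
    rw [← Finset.prod_pow]
    apply Finset.prod_congr rfl
    intro i hi
    have hzi := hznn i hi
    rw [← Real.rpow_natCast (z i ^ (1/(t:ℝ))) t, ← Real.rpow_mul hzi]
    rw [show 1/(t:ℝ) * (t:ℕ) = 1 by field_simp]
    exact Real.rpow_one _
  have hpnn : 0 ≤ ∏ i ∈ Finset.range t, z i ^ (1/(t:ℝ)) :=
    Finset.prod_nonneg fun i hi => Real.rpow_nonneg (hznn i hi) _
  calc (n.descFactorial t : ℝ) = ∏ i ∈ Finset.range t, z i := hprod
    _ = (∏ i ∈ Finset.range t, z i ^ (1/(t:ℝ)))^t := hlhs.symm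
    _ ≤ ((n:ℝ) - ((t:ℝ)-1)/2)^t := pow_le_pow_left₀ hpnn amgm t

end Aux

/-- For `t ≥ 0`, `r ≥ 1` and `n ≥ t + r`:
`θ_{t,r}(n) ≤ ((n − (t−1)/2)·(n−t)^{r−1}/(r−1)!)^t` (as reals). -/
theorem theta_upper_bound_simple (n t r : ℕ) (hr : 1 ≤ r) (h : t + r ≤ n) :
    (theta t r n : ℝ) ≤
      (((n : ℝ) - ((t : ℝ) - 1) / 2) * ((n : ℝ) - (t : ℝ)) ^ (r - 1) /
          ((r - 1).factorial : ℝ)) ^ t := by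
  have h1 : (theta t r n : ℝ) ≤ (cnt n r t Finset.univ : ℝ) := by
    exact_mod_cast theta_le_cnt t r n
  have h2 := main_bound n r t (Finset.univ : Finset (Fin n))
  have hcard : (Finset.univ : Finset (Fin n)).card = n := by simp
  rw [hcard] at h2
  have hb : bfun r (n - t) = (((n - t : ℕ)):ℝ)^(r-1) / ((r-1).factorial : ℝ) :=
    bfun_eq r (n-t) hr (by omega)
  have hcast : (((n - t : ℕ)):ℝ) = (n:ℝ) - (t:ℝ) := by
    rw [Nat.cast_sub (by omega)]
  rw [hb, hcast] at h2
  have hdesc := desc_le_amgm n t (by omega)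
  set X : ℝ := ((n:ℝ) - (t:ℝ))^(r-1) / ((r-1).factorial : ℝ) with hX
  have hXnn : 0 ≤ X := by
    have hnt : (0:ℝ) ≤ (n:ℝ) - (t:ℝ) := by
      have : (t:ℝ) ≤ (n:ℝ) := by exact_mod_cast by omega
      linarith
    positivity
  have h3 : (cnt n r t Finset.univ : ℝ) ≤ ((n:ℝ) - ((t:ℝ)-1)/2)^t * X^t := by
    refine h2.trans ?_
    exact mul_le_mul_of_nonneg_right hdesc (by positivity)
  have hfinal : (((n : ℝ) - ((t : ℝ) - 1) / 2) * ((n : ℝ) - (t : ℝ)) ^ (r - 1) /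
          ((r - 1).factorial : ℝ)) ^ t = ((n:ℝ) - ((t:ℝ)-1)/2)^t * X^t := by
    rw [← mul_pow, hX]
    congr 1
    ring
  rw [hfinal]
  exact h1.trans h3
end

section
/- Suppose G is the generator matrix of an [n,k,t,2] functional batch code over 𝔽₂ with t ≥ 1. Then 2^k − 1 ≤ (1/2)·(n − 3t/4 + 5/4)², where the right-hand side is interpreted as a real number. -/
lemma span_two_aux {k n : ℕ} (col : Fin n → (Fin k → ZMod 2)) (R : Finset (Fin n))
    (v : Fin k → ZMod 2) (hcard : R.card ≤ 2) (hv : v ≠ 0)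
    (hmem : v ∈ Submodule.span (ZMod 2) (col '' (R : Set (Fin n)))) :
    (∃ j ∈ R, col j = v) ∨ (∃ i ∈ R, ∃ j ∈ R, i ≠ j ∧ col i + col j = v) := by
  have hzc : ∀ c : ZMod 2, c = 0 ∨ c = 1 := by decide
  have hc3 : R.card = 0 ∨ R.card = 1 ∨ R.card = 2 := by omega
  rcases hc3 with h0 | h1 | h2
  · exfalso
    rw [Finset.card_eq_zero] at h0
    subst h0
    simp only [Finset.coe_empty, Set.image_empty, Submodule.span_empty,
      Submodule.mem_bot] at hmem
    exact hv hmem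
  · obtain ⟨a, rfl⟩ := Finset.card_eq_one.mp h1
    simp only [Finset.coe_singleton, Set.image_singleton] at hmem
    obtain ⟨c, hc⟩ := Submodule.mem_span_singleton.mp hmem
    rcases hzc c with rfl | rfl
    · exfalso; apply hv; rw [← hc]; simp
    · left; exact ⟨a, Finset.mem_singleton_self a, by simpa using hc⟩
  · obtain ⟨a, b, hab, rfl⟩ := Finset.card_eq_two.mp h2
    have : (col '' (({a, b} : Finset (Fin n)) : Set (Fin n))) = {col a, col b} := by
      simp [Set.image_insert_eq]
    rw [this] at hmem
    obtain ⟨c, d, hcd⟩ := Submodule.mem_span_pair.mp hmem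
    have ha : a ∈ ({a, b} : Finset (Fin n)) := by simp
    have hb : b ∈ ({a, b} : Finset (Fin n)) := by simp
    rcases hzc c with rfl | rfl <;> rcases hzc d with rfl | rfl
    · exfalso; apply hv; rw [← hcd]; simp
    · left; exact ⟨b, hb, by simpa using hcd⟩
    · left; exact ⟨a, ha, by simpa using hcd⟩
    · right; exact ⟨a, ha, b, hb, hab, by simpa using hcd⟩

/-- Per-vector counting: for each nonzero `v`, `2t ≤ n + m v` and `t ≤ m v + P v`. -/
lemma per_v_count {k n t : ℕ} (col : Fin n → (Fin k → ZMod 2))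
    (v : Fin k → ZMod 2) (hv : v ≠ 0)
    (R : Fin t → Finset (Fin n))
    (hdisj : ∀ ℓ₁ ℓ₂ : Fin t, ℓ₁ ≠ ℓ₂ → Disjoint (R ℓ₁) (R ℓ₂))
    (hcard : ∀ ℓ, (R ℓ).card ≤ 2)
    (hspan : ∀ ℓ, v ∈ Submodule.span (ZMod 2) (col '' (R ℓ : Set (Fin n)))) :
    2 * t ≤ n + (Finset.univ.filter (fun j => col j = v)).card ∧
    t ≤ (Finset.univ.filter (fun j => col j = v)).card +
        ((Finset.univ.powersetCard 2).filter
          (fun p : Finset (Fin n) => (∑ j ∈ p, col j) = v)).card := by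
  classical
  set m := (Finset.univ.filter (fun j => col j = v)).card with hm
  have halt : ∀ ℓ, (∃ j ∈ R ℓ, col j = v) ∨
      (∃ i ∈ R ℓ, ∃ j ∈ R ℓ, i ≠ j ∧ col i + col j = v) :=
    fun ℓ => span_two_aux col (R ℓ) v (hcard ℓ) hv (hspan ℓ)
  have hne : ∀ ℓ, (R ℓ).Nonempty := by
    intro ℓ
    rcases halt ℓ with ⟨j, hj, _⟩ | ⟨i, hi, _⟩
    · exact ⟨j, hj⟩
    · exact ⟨i, hi⟩
  set S1 : Finset (Fin t) := Finset.univ.filter (fun ℓ => ∃ j ∈ R ℓ, col j = v) with hS1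
  -- each ℓ not in S1 has (R ℓ).card = 2 and is a "pair" recovery
  have hpair : ∀ ℓ ∉ S1, (R ℓ).card = 2 ∧ (∑ j ∈ R ℓ, col j) = v := by
    intro ℓ hℓ
    have hnot : ¬ ∃ j ∈ R ℓ, col j = v := by
      intro h; exact hℓ (Finset.mem_filter.mpr ⟨Finset.mem_univ _, h⟩)
    rcases halt ℓ with h | ⟨i, hi, j, hj, hij, hsum⟩
    · exact absurd h hnot
    · have hsub : ({i, j} : Finset (Fin n)) ⊆ R ℓ := by
        intro x hx
        rcases Finset.mem_insert.mp hx with rfl | hx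
        · exact hi
        · exact (Finset.mem_singleton.mp hx) ▸ hj
      have hc2 : ({i, j} : Finset (Fin n)).card = 2 := Finset.card_pair hij
      have heq : R ℓ = {i, j} :=
        (Finset.eq_of_subset_of_card_le hsub (by rw [hc2]; exact hcard ℓ)).symm
      refine ⟨by rw [heq, hc2], ?_⟩
      rw [heq, Finset.sum_pair hij]
      exact hsum
  -- card S1 ≤ m
  have hS1m : S1.card ≤ m := by
    have hch : ∀ ℓ ∈ S1, ∃ j, j ∈ R ℓ ∧ col j = v := by
      intro ℓ hℓ
      have := (Finset.mem_filter.mp hℓ).2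
      simpa using this
    choose f hf1 hf2 using hch
    rw [hm]
    apply Finset.card_le_card_of_injOn (fun ℓ => if h : ℓ ∈ S1 then f ℓ h else (hne ℓ).choose)
    · intro ℓ hℓ
      simp only [hℓ, dif_pos]
      rw [dif_pos (show ℓ ∈ S1 from hℓ)]
      exact Finset.mem_filter.mpr ⟨Finset.mem_univ _, hf2 ℓ hℓ⟩
    · intro ℓ₁ h₁ ℓ₂ h₂ heq
      simp only [Finset.mem_coe] at h₁ h₂
      simp only [h₁, h₂, dif_pos] at heq
      by_contra hneq
      exact Finset.disjoint_left.mp (hdisj ℓ₁ ℓ₂ hneq) (hf1 ℓ₁ h₁) (heq ▸ hf1 ℓ₂ h₂)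
  -- sum of cards ≤ n
  have hsumcard : (∑ ℓ, (R ℓ).card) ≤ n := by
    have hbu : (Finset.univ.biUnion R).card = ∑ ℓ, (R ℓ).card :=
      Finset.card_biUnion (fun x _ y _ hxy => hdisj x y hxy)
    calc (∑ ℓ, (R ℓ).card) = (Finset.univ.biUnion R).card := hbu.symm
      _ ≤ (Finset.univ : Finset (Fin n)).card := Finset.card_le_card (Finset.subset_univ _)
      _ = n := by simp
  constructor
  · -- 2t ≤ n + m
    have hlow : 2 * t ≤ (∑ ℓ, (R ℓ).card) + S1.card := by
      have : ∀ ℓ : Fin t, 2 ≤ (R ℓ).card + (if ℓ ∈ S1 then 1 else 0) := by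
        intro ℓ
        by_cases h : ℓ ∈ S1
        · simp only [h, if_pos]
          have := Finset.card_pos.mpr (hne ℓ)
          omega
        · simp only [h, if_neg, not_false_iff]
          have := (hpair ℓ h).1
          omega
      calc 2 * t = ∑ _ℓ : Fin t, 2 := by simp [mul_comm]
        _ ≤ ∑ ℓ, ((R ℓ).card + (if ℓ ∈ S1 then 1 else 0)) := Finset.sum_le_sum (fun ℓ _ => this ℓ)
        _ = (∑ ℓ, (R ℓ).card) + S1.card := by
            rw [Finset.sum_add_distrib]
            congr 1
            simp [hS1]
    omega
  · -- t ≤ m + P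
    have hcompl : t = S1.card + S1ᶜ.card := by
      rw [Finset.card_add_card_compl S1, Fintype.card_fin]
    have hS2 : S1ᶜ.card ≤ ((Finset.univ.powersetCard 2).filter
        (fun p : Finset (Fin n) => (∑ j ∈ p, col j) = v)).card := by
      apply Finset.card_le_card_of_injOn R
      · intro ℓ hℓ
        have hℓ' : ℓ ∉ S1 := Finset.mem_compl.mp hℓ
        obtain ⟨hc2, hsum⟩ := hpair ℓ hℓ'
        exact Finset.mem_filter.mpr ⟨Finset.mem_powersetCard.mpr
          ⟨Finset.subset_univ _, hc2⟩, hsum⟩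
      · intro ℓ₁ _ ℓ₂ _ heq
        by_contra hneq
        obtain ⟨x, hx⟩ := hne ℓ₁
        exact Finset.disjoint_left.mp (hdisj ℓ₁ ℓ₂ hneq) hx (heq ▸ hx)
    calc t = S1.card + S1ᶜ.card := hcompl
      _ ≤ _ := Nat.add_le_add hS1m hS2


/-- Real-arithmetic core: the two counting inequalities imply the bound. -/
lemma real_core (x τ M : ℝ) (hx : 0 ≤ x) (hτ : 1 ≤ τ)
    (hM : M = 0 ∨ M = 1 ∨ 3 ≤ M)
    (h1 : 2 * τ * M ≤ x * (M + 1))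
    (h2 : 2 * M * τ ≤ x * (x + 1)) :
    M ≤ (1 / 2) * (x - 3 * τ / 4 + 5 / 4) ^ 2 := by
  rcases hM with rfl | rfl | hM3
  · positivity
  · -- M = 1 : τ ≤ x
    have hτx : τ ≤ x := by linarith
    nlinarith [sq_nonneg (x - 3 * τ / 4 + 5 / 4 - 3 / 2)]
  · -- M ≥ 3
    have hM0 : (0 : ℝ) ≤ 2 * M := by linarith
    set S := Real.sqrt (2 * M) with hS
    have hS0 : 0 ≤ S := Real.sqrt_nonneg _
    have hS2 : S ^ 2 = 2 * M := Real.sq_sqrt hM0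
    set u := Real.sqrt τ with hu
    have hu1 : 1 ≤ u := by
      rw [hu]
      rw [show (1:ℝ) = Real.sqrt 1 by simp]
      exact Real.sqrt_le_sqrt hτ
    have hu2 : u ^ 2 = τ := Real.sq_sqrt (by linarith)
    -- suffices to show  S ≤ x - 3τ/4 + 5/4
    suffices hfS : S ≤ x - 3 * τ / 4 + 5 / 4 by
      nlinarith [sq_nonneg (x - 3 * τ / 4 + 5 / 4 - S)]
    by_cases hcase : S ≤ 3 * τ / 4 + 5 / 4
    · -- x ≥ 3τ/2 from h1
      have hx32 : 3 * τ / 2 ≤ x := by nlinarith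
      linarith
    · push_neg at hcase
      -- S * u ≤ x + 1/2
      have hSu : S * u ≤ x + 1 / 2 := by
        have h3 : S * u = Real.sqrt (2 * M * τ) := by
          rw [hS, hu, ← Real.sqrt_mul hM0]
        have h4 : 2 * M * τ ≤ (x + 1 / 2) ^ 2 := by nlinarith
        rw [h3]
        calc Real.sqrt (2 * M * τ) ≤ Real.sqrt ((x + 1 / 2) ^ 2) := Real.sqrt_le_sqrt h4
          _ = x + 1 / 2 := Real.sqrt_sq (by linarith)
      -- S ≥ (3/4)(u+1)
      have hSbig : 3 / 4 * (u + 1) ≤ S := by nlinarith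
      have key : 0 ≤ (u - 1) * (S - 3 / 4 * (u + 1)) :=
        mul_nonneg (by linarith) (by linarith)
      nlinarith

/-- If `G` generates an `[n,k,t,2]` functional batch code with `t ≥ 1`, then
`2^k − 1 ≤ (1/2)·(n − 3t/4 + 5/4)²` (as reals). -/
theorem batch_code_bound_r_two (k n t : ℕ) (ht : 1 ≤ t)
    (G : Matrix (Fin k) (Fin n) (ZMod 2))
    (hG : IsFunctionalBatchCodeLoc k n t 2 G) :
    (2 : ℝ) ^ k - 1 ≤ (1 / 2) * ((n : ℝ) - 3 * (t : ℝ) / 4 + 5 / 4) ^ 2 := by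

  classical
  set col : Fin n → (Fin k → ZMod 2) := fun j i => G i j with hcol
  set NZ : Finset (Fin k → ZMod 2) := Finset.univ.filter (fun v => v ≠ 0) with hNZdef
  set m : (Fin k → ZMod 2) → ℕ :=
    fun v => (Finset.univ.filter (fun j => col j = v)).card with hmdef
  set P : (Fin k → ZMod 2) → ℕ :=
    fun v => ((Finset.univ.powersetCard 2).filter
      (fun p : Finset (Fin n) => (∑ j ∈ p, col j) = v)).card with hPdef
  have hkey : ∀ v ∈ NZ, 2 * t ≤ n + m v ∧ t ≤ m v + P v := by
    intro v hv
    have hv0 : v ≠ 0 := (Finset.mem_filter.mp hv).2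
    obtain ⟨R, hdisj, hcard, hspan⟩ := hG (fun _ => v) (fun _ => hv0)
    exact per_v_count col v hv0 R hdisj hcard (fun ℓ => hspan ℓ)
  -- fiberwise sums
  have hmsum : ∑ v ∈ NZ, m v ≤ n := by
    have h1 : ∑ v ∈ (Finset.univ : Finset (Fin k → ZMod 2)), m v = n := by
      have h := Finset.card_eq_sum_card_fiberwise
        (s := (Finset.univ : Finset (Fin n)))
        (t := (Finset.univ : Finset (Fin k → ZMod 2))) (f := col)
        (fun x _ => Finset.mem_univ _)
      simpa [hmdef] using h.symm
    calc ∑ v ∈ NZ, m v ≤ ∑ v ∈ Finset.univ, m v :=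
          Finset.sum_le_sum_of_subset (Finset.subset_univ _)
      _ = n := h1
  have hPsum : ∑ v ∈ NZ, P v ≤ n.choose 2 := by
    have h1 : ∑ v ∈ (Finset.univ : Finset (Fin k → ZMod 2)), P v = n.choose 2 := by
      have h := Finset.card_eq_sum_card_fiberwise
        (s := (Finset.univ.powersetCard 2 : Finset (Finset (Fin n))))
        (t := (Finset.univ : Finset (Fin k → ZMod 2)))
        (f := fun p => ∑ j ∈ p, col j)
        (fun x _ => Finset.mem_univ _)
      have h2 : (Finset.univ.powersetCard 2 : Finset (Finset (Fin n))).card = n.choose 2 := by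
        simp [Finset.card_powersetCard]
      rw [h2] at h
      simpa [hPdef] using h.symm
    calc ∑ v ∈ NZ, P v ≤ ∑ v ∈ Finset.univ, P v :=
          Finset.sum_le_sum_of_subset (Finset.subset_univ _)
      _ = n.choose 2 := h1
  -- sum the per-vector bounds
  have hA : NZ.card * (2 * t) ≤ NZ.card * n + n := by
    calc NZ.card * (2 * t) = ∑ _v ∈ NZ, 2 * t := by rw [Finset.sum_const, smul_eq_mul]
      _ ≤ ∑ v ∈ NZ, (n + m v) := Finset.sum_le_sum (fun v hv => (hkey v hv).1)
      _ = NZ.card * n + ∑ v ∈ NZ, m v := by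
          rw [Finset.sum_add_distrib, Finset.sum_const, smul_eq_mul]
      _ ≤ NZ.card * n + n := Nat.add_le_add_left hmsum _
  have hB : NZ.card * t ≤ n + n.choose 2 := by
    calc NZ.card * t = ∑ _v ∈ NZ, t := by rw [Finset.sum_const, smul_eq_mul]
      _ ≤ ∑ v ∈ NZ, (m v + P v) := Finset.sum_le_sum (fun v hv => (hkey v hv).2)
      _ = (∑ v ∈ NZ, m v) + ∑ v ∈ NZ, P v := Finset.sum_add_distrib
      _ ≤ n + n.choose 2 := Nat.add_le_add hmsum hPsum
  -- value of NZ.card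
  have hNval : NZ.card = 2 ^ k - 1 := by
    have h1 : NZ = (Finset.univ : Finset (Fin k → ZMod 2)).erase 0 := by
      rw [hNZdef, Finset.filter_ne']
    rw [h1, Finset.card_erase_of_mem (Finset.mem_univ _)]
    congr 1
    simp [Fintype.card_fun ]
  -- 2 * (N * t) ≤ n * (n + 1) over ℕ
  have hB2 : 2 * (NZ.card * t) ≤ n * (n + 1) := by
    have hch : 2 * n.choose 2 = n * (n - 1) := by
      rcases n with _ | nn
      · simp
      · rw [Nat.choose_two_right, Nat.mul_div_cancel']
        have : Even ((nn + 1) * nn) := by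
          rw [mul_comm]
          exact Nat.even_mul_succ_self nn
        exact this.two_dvd
    have hn1 : 2 * n + n * (n - 1) = n * (n + 1) := by
      rcases n with _ | nn
      · simp
      · simp only [Nat.add_sub_cancel]
        ring
    calc 2 * (NZ.card * t) ≤ 2 * (n + n.choose 2) := Nat.mul_le_mul_left 2 hB
      _ = 2 * n + 2 * n.choose 2 := by ring
      _ = 2 * n + n * (n - 1) := by rw [hch]
      _ = n * (n + 1) := hn1
  -- trichotomy for NZ.card
  have htri : NZ.card = 0 ∨ NZ.card = 1 ∨ 3 ≤ NZ.card := by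
    rcases k with _ | _ | k2
    · left; simp [hNval]
    · right; left; simp [hNval]
    · right; right
      rw [hNval]
      have h1 : 1 ≤ 2 ^ k2 := Nat.one_le_two_pow
      have h2 : 2 ^ (k2 + 2) = 4 * 2 ^ k2 := by ring
      omega
  -- cast everything to ℝ
  have hMcast : ((NZ.card : ℕ) : ℝ) = (2 : ℝ) ^ k - 1 := by
    rw [hNval]
    have h1 : (1:ℕ) ≤ 2 ^ k := Nat.one_le_two_pow
    push_cast [h1]
    ring
  rw [← hMcast]
  apply real_core (x := (n : ℝ)) (τ := (t : ℝ)) (M := (NZ.card : ℝ))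
  · exact Nat.cast_nonneg n
  · exact_mod_cast ht
  · rcases htri with h | h | h
    · left; exact_mod_cast h
    · right; left; exact_mod_cast h
    · right; right; exact_mod_cast h
  · have := (Nat.cast_le (α := ℝ)).mpr hA
    push_cast at this
    nlinarith [this]
  · have := (Nat.cast_le (α := ℝ)).mpr hB2
    push_cast at this
    nlinarith [this]
end
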